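/- arXiv:1812.00601 — 12 statements merged into one kernel-verified Lean document; each statement's English description precedes it below -/
import Mathlib

section
/- Let E be a real Banach space, a < b real numbers and τ = b - a. If f : ℝ → E is three times continuously differentiable on [a,b], then (f(b) - f(a))/τ - (1/2)(f'(b) + f'(a)) = (1/(2τ)) ∫_a^b (b - s)(a - s) f'''(s) ds. -/
/-!
The kernel `(b - s) * (a - s)` vanishes at both endpoints and has second derivative `2`, so
integrating by parts twice amounts to the observation that
`F s = (b - s) * (a - s) • f'' s - (2 * s - (a + b)) • f' s + 2 • f s`
is an antiderivative of `(b - s) * (a - s) • f''' s`, with `F b - F a = 2 (f b - f a) - τ (f' b + f' a)`.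
-/

open Set intervalIntegral

section

variable {E : Type*} [NormedAddCommGroup E] [NormedSpace ℝ E] {f f' f'' f''' : ℝ → E} {a b : ℝ}

theorem hasDerivWithinAt_kernel_smul_antideriv {s : Set ℝ} {t : ℝ} {y : E}
    (hf : HasDerivWithinAt f (f' t) s t) (hf' : HasDerivWithinAt f' (f'' t) s t)
    (hf'' : HasDerivWithinAt f'' y s t) :
    HasDerivWithinAt
      (fun x => ((b - x) * (a - x)) • f'' x - (2 * x - (a + b)) • f' x + (2 : ℝ) • f x)
      (((b - t) * (a - t)) • y) s t := by
  have hkernel : HasDerivWithinAt (fun x : ℝ => (b - x) * (a - x))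
      (-1 * (a - t) + (b - t) * -1) s t :=
    ((hasDerivWithinAt_id t s).const_sub b).mul ((hasDerivWithinAt_id t s).const_sub a)
  have hlinear : HasDerivWithinAt (fun x : ℝ => 2 * x - (a + b)) (2 * 1) s t :=
    ((hasDerivWithinAt_id t s).const_mul 2).sub_const (a + b)
  refine (((hkernel.smul hf'').sub (hlinear.smul hf')).add (hf.const_smul (2 : ℝ))).congr_deriv ?_
  match_scalars <;> ring

theorem integral_kernel_smul_third_deriv [CompleteSpace E] (hab : a ≤ b)
    (hf : ∀ t ∈ Icc a b, HasDerivWithinAt f (f' t) (Icc a b) t)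
    (hf' : ∀ t ∈ Icc a b, HasDerivWithinAt f' (f'' t) (Icc a b) t)
    (hf'' : ∀ t ∈ Icc a b, HasDerivWithinAt f'' (f''' t) (Icc a b) t)
    (hf''' : ContinuousOn f''' (Icc a b)) :
    ∫ s in a..b, ((b - s) * (a - s)) • f''' s = (2 : ℝ) • (f b - f a) - (b - a) • (f' b + f' a) := by
  have hderiv := fun t ht => hasDerivWithinAt_kernel_smul_antideriv (a := a) (b := b)
    (hf t ht) (hf' t ht) (hf'' t ht)
  have hint : IntervalIntegrable (fun s => ((b - s) * (a - s)) • f''' s) MeasureTheory.volume a b :=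
    ((continuous_const.sub continuous_id).mul (continuous_const.sub continuous_id)
      |>.continuousOn.smul hf''').intervalIntegrable_of_Icc hab
  rw [integral_eq_sub_of_hasDerivAt_of_le hab (fun t ht => (hderiv t ht).continuousWithinAt)
    (fun t ht => (hderiv t (Ioo_subset_Icc_self ht)).hasDerivAt (Icc_mem_nhds ht.1 ht.2)) hint]
  match_scalars <;> ring

end

/-- Crank–Nicolson consistency identity:
`(f(b) - f(a))/τ - (1/2)(f'(b) + f'(a)) = (1/(2τ)) ∫_a^b (b - s)(a - s) f'''(s) ds`. -/
theorem crank_nicolson_consistency_identity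
    {E : Type*} [NormedAddCommGroup E] [NormedSpace ℝ E] [CompleteSpace E]
    (a b τ : ℝ) (hab : a < b) (hτ : τ = b - a)
    (f f' f'' f''' : ℝ → E)
    (hf : ∀ t ∈ Icc a b, HasDerivWithinAt f (f' t) (Icc a b) t)
    (hf' : ∀ t ∈ Icc a b, HasDerivWithinAt f' (f'' t) (Icc a b) t)
    (hf'' : ∀ t ∈ Icc a b, HasDerivWithinAt f'' (f''' t) (Icc a b) t)
    (hf''' : ContinuousOn f''' (Icc a b)) :
    (1 / τ) • (f b - f a) - (1 / 2 : ℝ) • (f' b + f' a)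
      = (1 / (2 * τ)) • ∫ s in a..b, ((b - s) * (a - s)) • f''' s := by
  have hτ0 : τ ≠ 0 := by rw [hτ]; exact sub_ne_zero.mpr hab.ne'
  rw [integral_kernel_smul_third_deriv hab.le hf hf' hf'' hf''', ← hτ]
  match_scalars <;> field_simp
end

section
/- Let E be a real Banach space, a < b real numbers and τ = b - a. If f : ℝ → E is twice continuously differentiable on [a,b] and θ ∈ [0,1], then ‖(f(b) - f(a))/τ - (θ f'(b) + (1-θ) f'(a))‖ ≤ τ^{1/2} (∫_a^b ‖f''(s)‖² ds)^{1/2}. -/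
open Set intervalIntegral MeasureTheory

/-!
Write `c = θ f'(b) + (1 - θ) f'(a)`. By the fundamental theorem of calculus, `f'` oscillates on
`[a, b]` by at most `∫_a^b ‖f''‖`, so every `f'(s)` lies within that distance of `f'(a)` and of
`f'(b)`, hence of their convex combination `c`. The mean value theorem applied to `t ↦ f t - t • c`
bounds the deviation of the slope `(f b - f a) / τ` from `c` by the same quantity, and
Cauchy–Schwarz gives `∫_a^b ‖f''‖ ≤ τ^{1/2} (∫_a^b ‖f''‖²)^{1/2}`.
-/

section

variable {E : Type*} [NormedAddCommGroup E] {a b : ℝ}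

theorem integral_norm_le_sqrt_length_mul_sqrt_integral_norm_sq {g : ℝ → E} (hab : a ≤ b)
    (hg : MemLp g 2 (volume.restrict (Ioc a b))) :
    ∫ t in a..b, ‖g t‖ ≤ (b - a) ^ ((1 : ℝ) / 2) * (∫ t in a..b, ‖g t‖ ^ 2) ^ ((1 : ℝ) / 2) := by
  have hpq : Real.HolderConjugate 2 2 := .two_two
  have hone : MemLp (fun _ => (1 : ℝ)) (ENNReal.ofReal 2) (volume.restrict (Ioc a b)) := by
    have : IsFiniteMeasure (volume.restrict (Ioc a b)) := by
      rw [isFiniteMeasure_restrict]; exact measure_Ioc_lt_top.ne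
    exact memLp_const 1
  have holder := integral_mul_norm_le_Lp_mul_Lq hpq hone (by simpa using hg.norm)
  simp only [norm_one, one_mul, norm_norm, Real.rpow_two] at holder
  simpa [integral_of_le hab, Real.volume_Ioc, hab] using holder

variable [NormedSpace ℝ E]

theorem integral_eq_sub_of_hasDerivWithinAt_Icc [CompleteSpace E] {g g' : ℝ → E} (hab : a ≤ b)
    (hg : ∀ t ∈ Icc a b, HasDerivWithinAt g (g' t) (Icc a b) t)
    (hint : IntervalIntegrable g' volume a b) : ∫ t in a..b, g' t = g b - g a :=
  integral_eq_sub_of_hasDerivAt_of_le hab (fun t ht => (hg t ht).continuousWithinAt)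
    (fun t ht => (hg t (Ioo_subset_Icc_self ht)).hasDerivAt (Icc_mem_nhds ht.1 ht.2)) hint

theorem norm_sub_le_integral_norm_of_hasDerivWithinAt_Icc [CompleteSpace E] {g g' : ℝ → E}
    (hg : ∀ t ∈ Icc a b, HasDerivWithinAt g (g' t) (Icc a b) t)
    (hg' : ContinuousOn g' (Icc a b)) {s t : ℝ} (hs : s ∈ Icc a b) (ht : t ∈ Icc a b) :
    ‖g t - g s‖ ≤ ∫ u in a..b, ‖g' u‖ := by
  wlog hst : s ≤ t generalizing s t
  · rw [norm_sub_rev]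
    exact this ht hs (le_of_not_ge hst)
  have hsub : Icc s t ⊆ Icc a b := Icc_subset_Icc hs.1 ht.2
  rw [← integral_eq_sub_of_hasDerivWithinAt_Icc hst (fun u hu => (hg u (hsub hu)).mono hsub)
    ((hg'.mono hsub).intervalIntegrable_of_Icc hst)]
  calc ‖∫ u in s..t, g' u‖ ≤ ∫ u in s..t, ‖g' u‖ := norm_integral_le_integral_norm hst
    _ ≤ ∫ u in a..b, ‖g' u‖ :=
      integral_mono_interval hs.1 hst ht.2 (.of_forall fun _ => norm_nonneg _)
        (hg'.norm.intervalIntegrable_of_Icc (hs.1.trans (hst.trans ht.2)))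

theorem norm_slope_sub_le_of_norm_deriv_sub_le {f f' : ℝ → E} {c : E} {M : ℝ} (hab : a < b)
    (hf : ∀ t ∈ Icc a b, HasDerivWithinAt f (f' t) (Icc a b) t)
    (hM : ∀ t ∈ Icc a b, ‖f' t - c‖ ≤ M) : ‖slope f a b - c‖ ≤ M := by
  have hmvt : ‖(f b - b • c) - (f a - a • c)‖ ≤ M * ‖b - a‖ :=
    (convex_Icc a b).norm_image_sub_le_of_norm_hasDerivWithin_le
      (fun t ht => by simpa using (hf t ht).sub ((hasDerivWithinAt_id t _).smul_const c)) hM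
      (left_mem_Icc.2 hab.le) (right_mem_Icc.2 hab.le)
  have hba : 0 < b - a := sub_pos.2 hab
  have hslope : slope f a b - c = (b - a)⁻¹ • ((f b - b • c) - (f a - a • c)) := by
    rw [slope_def_module]
    match_scalars <;> field_simp
    ring
  rw [hslope, norm_smul, Real.norm_of_nonneg (inv_nonneg.2 hba.le), inv_mul_le_iff₀ hba, mul_comm]
  rwa [Real.norm_of_nonneg hba.le] at hmvt

end

/-- L²-type bound for the θ-scheme consistency error:
`‖(f(b) - f(a))/τ - (θ f'(b) + (1-θ) f'(a))‖ ≤ τ^{1/2} (∫_a^b ‖f''(s)‖² ds)^{1/2}`. -/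
theorem theta_consistency_L2_bound
    {E : Type*} [NormedAddCommGroup E] [NormedSpace ℝ E] [CompleteSpace E]
    (a b τ θ : ℝ) (hab : a < b) (hτ : τ = b - a) (hθ : θ ∈ Icc (0 : ℝ) 1)
    (f f' f'' : ℝ → E)
    (hf : ∀ t ∈ Icc a b, HasDerivWithinAt f (f' t) (Icc a b) t)
    (hf' : ∀ t ∈ Icc a b, HasDerivWithinAt f' (f'' t) (Icc a b) t)
    (hf'' : ContinuousOn f'' (Icc a b)) :
    ‖(1 / τ) • (f b - f a) - (θ • f' b + (1 - θ) • f' a)‖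
      ≤ τ ^ ((1 : ℝ) / 2) * (∫ s in a..b, ‖f'' s‖ ^ 2) ^ ((1 : ℝ) / 2) := by
  subst hτ
  have hosc : ∀ s ∈ Icc a b,
      ‖f' s - (θ • f' b + (1 - θ) • f' a)‖ ≤ ∫ u in a..b, ‖f'' u‖ := by
    intro s hs
    have hball : ∀ t ∈ Icc a b, f' t ∈ Metric.closedBall (f' s) (∫ u in a..b, ‖f'' u‖) :=
      fun t ht => mem_closedBall_iff_norm.2
        (norm_sub_le_integral_norm_of_hasDerivWithinAt_Icc hf' hf'' hs ht)
    have hcomb := convex_closedBall (f' s) _ (hball b (right_mem_Icc.2 hab.le))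
      (hball a (left_mem_Icc.2 hab.le)) hθ.1 (sub_nonneg.2 hθ.2) (add_sub_cancel θ 1)
    rwa [mem_closedBall_iff_norm'] at hcomb
  have hL2 : MemLp f'' 2 (volume.restrict (Ioc a b)) :=
    (memLp_two_iff_integrable_sq_norm
      ((hf''.mono Ioc_subset_Icc_self).aestronglyMeasurable measurableSet_Ioc)).2
      ((hf''.norm.pow 2).integrableOn_Icc.mono_set Ioc_subset_Icc_self)
  calc _ = ‖slope f a b - (θ • f' b + (1 - θ) • f' a)‖ := by rw [slope_def_module, one_div]
    _ ≤ ∫ u in a..b, ‖f'' u‖ := norm_slope_sub_le_of_norm_deriv_sub_le hab hf hosc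
    _ ≤ _ := integral_norm_le_sqrt_length_mul_sqrt_integral_norm_sq hab.le hL2
end

section
/- Let E be a real Banach space, a < b real numbers and τ = b - a. If f : ℝ → E is three times continuously differentiable on [a,b], then ‖(f(b) - f(a))/τ - (1/2)(f'(b) + f'(a))‖ ≤ (τ/8) ∫_a^b ‖f'''(s)‖ ds. -/
open Set intervalIntegral MeasureTheory

/-!
With the Peano kernel `k(s) = (s - a)(b - s)/2` of the trapezoidal rule, the function
`f + ((a + b)/2 - s) • f' - k • f''` has derivative `-k • f'''`, and its increment over
`[a, b]` is the trapezoidal error `f b - f a - ((b - a)/2) • (f' b + f' a)`. Hence that error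
is `-∫ k • f'''`, and `0 ≤ k ≤ (b - a)²/8` on `[a, b]` gives the bound after dividing by
`τ = b - a`.
-/

noncomputable def trapezoidPeanoKernel (a b s : ℝ) : ℝ := (s - a) * (b - s) / 2

section PeanoKernel

variable {a b : ℝ}

theorem continuous_trapezoidPeanoKernel : Continuous (trapezoidPeanoKernel a b) := by
  unfold trapezoidPeanoKernel
  fun_prop

theorem hasDerivAt_trapezoidPeanoKernel (s : ℝ) :
    HasDerivAt (trapezoidPeanoKernel a b) ((a + b) / 2 - s) s := by
  have h :=
    (((hasDerivAt_id s).sub_const a).mul ((hasDerivAt_const s b).sub (hasDerivAt_id s))).div_const 2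
  simp only [id_eq, Pi.mul_apply, Pi.sub_apply] at h
  exact h.congr_deriv (by ring)

theorem abs_trapezoidPeanoKernel_le {s : ℝ} (hs : s ∈ Icc a b) :
    |trapezoidPeanoKernel a b s| ≤ (b - a) ^ 2 / 8 := by
  unfold trapezoidPeanoKernel
  have hsa : 0 ≤ s - a := sub_nonneg.2 hs.1
  have hbs : 0 ≤ b - s := sub_nonneg.2 hs.2
  rw [abs_of_nonneg (by positivity)]
  nlinarith [sq_nonneg ((s - a) - (b - s))]

end PeanoKernel

section TrapezoidError

variable {E : Type*} [NormedAddCommGroup E] [NormedSpace ℝ E] {a b : ℝ}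

theorem norm_integral_smul_le_mul_integral_norm {k : ℝ → ℝ} {g : ℝ → E} {C : ℝ}
    (hab : a ≤ b) (hk : ∀ s ∈ Icc a b, |k s| ≤ C)
    (hg : IntervalIntegrable (fun s => ‖g s‖) volume a b) :
    ‖∫ s in a..b, k s • g s‖ ≤ C * ∫ s in a..b, ‖g s‖ := by
  rw [← intervalIntegral.integral_const_mul]
  refine norm_integral_le_of_norm_le hab (Filter.Eventually.of_forall fun s hs => ?_)
    (hg.const_mul C)
  rw [norm_smul, Real.norm_eq_abs]
  exact mul_le_mul_of_nonneg_right (hk s (Ioc_subset_Icc_self hs)) (norm_nonneg _)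

theorem trapezoid_error_eq_neg_integral_peanoKernel [CompleteSpace E] (hab : a ≤ b)
    {f f' f'' f''' : ℝ → E}
    (hf : ∀ t ∈ Icc a b, HasDerivWithinAt f (f' t) (Icc a b) t)
    (hf' : ∀ t ∈ Icc a b, HasDerivWithinAt f' (f'' t) (Icc a b) t)
    (hf'' : ∀ t ∈ Icc a b, HasDerivWithinAt f'' (f''' t) (Icc a b) t)
    (hf''' : ContinuousOn f''' (Icc a b)) :
    f b - f a - ((b - a) / 2) • (f' b + f' a)
      = -∫ s in a..b, trapezoidPeanoKernel a b s • f''' s := by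
  set k := trapezoidPeanoKernel a b
  let H : ℝ → E := fun s => f s + ((a + b) / 2 - s) • f' s - k s • f'' s
  have hH_cont : ContinuousOn H (Icc a b) := by
    have hcont {u v : ℝ → E} (h : ∀ t ∈ Icc a b, HasDerivWithinAt u (v t) (Icc a b) t) :
        ContinuousOn u (Icc a b) := fun t ht => (h t ht).continuousWithinAt
    exact ((hcont hf).add
      ((continuous_const.sub continuous_id).continuousOn.smul (hcont hf'))).sub
      (continuous_trapezoidPeanoKernel.continuousOn.smul (hcont hf''))
  have hH_deriv : ∀ s ∈ Ioo a b, HasDerivAt H (-(k s • f''' s)) s := by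
    intro s hs
    have hinterior {u v : ℝ → E} (h : ∀ t ∈ Icc a b, HasDerivWithinAt u (v t) (Icc a b) t) :
        HasDerivAt u (v s) s :=
      (h s (Ioo_subset_Icc_self hs)).hasDerivAt (Icc_mem_nhds hs.1 hs.2)
    have hlin : HasDerivAt (fun s : ℝ => (a + b) / 2 - s) (-1) s :=
      (hasDerivAt_id s).const_sub _
    refine (((hinterior hf).add (hlin.smul (hinterior hf'))).sub
      ((hasDerivAt_trapezoidPeanoKernel s).smul (hinterior hf''))).congr_deriv ?_
    module
  have hFTC := integral_eq_sub_of_hasDeriv_right_of_le hab hH_cont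
    (fun s hs => (hH_deriv s hs).hasDerivWithinAt)
    ((continuous_trapezoidPeanoKernel.continuousOn.smul hf''').neg.intervalIntegrable_of_Icc hab)
  rw [intervalIntegral.integral_neg, neg_eq_iff_eq_neg] at hFTC
  rw [hFTC]
  simp only [H, k, trapezoidPeanoKernel]
  match_scalars <;> ring

end TrapezoidError

/-- L¹-type bound for the Crank–Nicolson consistency error:
`‖(f(b) - f(a))/τ - (1/2)(f'(b) + f'(a))‖ ≤ (τ/8) ∫_a^b ‖f'''(s)‖ ds`. -/
theorem crank_nicolson_consistency_L1_bound
    {E : Type*} [NormedAddCommGroup E] [NormedSpace ℝ E] [CompleteSpace E]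
    (a b τ : ℝ) (hab : a < b) (hτ : τ = b - a)
    (f f' f'' f''' : ℝ → E)
    (hf : ∀ t ∈ Icc a b, HasDerivWithinAt f (f' t) (Icc a b) t)
    (hf' : ∀ t ∈ Icc a b, HasDerivWithinAt f' (f'' t) (Icc a b) t)
    (hf'' : ∀ t ∈ Icc a b, HasDerivWithinAt f'' (f''' t) (Icc a b) t)
    (hf''' : ContinuousOn f''' (Icc a b)) :
    ‖(1 / τ) • (f b - f a) - (1 / 2 : ℝ) • (f' b + f' a)‖
      ≤ (τ / 8) * ∫ s in a..b, ‖f''' s‖ := by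
  subst hτ
  have hτ_pos : 0 < b - a := sub_pos.2 hab
  have hscale : (1 / (b - a)) • (f b - f a) - (1 / 2 : ℝ) • (f' b + f' a)
      = (1 / (b - a)) • (f b - f a - ((b - a) / 2) • (f' b + f' a)) := by
    match_scalars <;> field_simp
  have hbound := norm_integral_smul_le_mul_integral_norm hab.le
    (fun s hs => abs_trapezoidPeanoKernel_le hs) (hf'''.norm.intervalIntegrable_of_Icc hab.le)
  rw [hscale, trapezoid_error_eq_neg_integral_peanoKernel hab.le hf hf' hf'' hf''', norm_smul,
    norm_neg, Real.norm_of_nonneg (by positivity)]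
  calc 1 / (b - a) * ‖∫ s in a..b, trapezoidPeanoKernel a b s • f''' s‖
      ≤ 1 / (b - a) * ((b - a) ^ 2 / 8 * ∫ s in a..b, ‖f''' s‖) := by gcongr
    _ = (b - a) / 8 * ∫ s in a..b, ‖f''' s‖ := by field_simp
end

section
/- Let E be a real Banach space, a < b real numbers and τ = b - a. If f : ℝ → E is three times continuously differentiable on [a,b], then ‖(f(b) - f(a))/τ - (1/2)(f'(b) + f'(a))‖ ≤ (τ^{3/2}/(2√30)) (∫_a^b ‖f'''(s)‖² ds)^{1/2}. -/
/-!
Integrating by parts twice against the Peano kernel `w s = (s - a) * (s - b) / 2` of the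
trapezoidal rule gives `∫_a^b w • f''' = f b - f a - ((b - a) / 2) • (f' b + f' a)`.
By Cauchy–Schwarz the norm of this integral is at most `‖w‖_{L²} ‖f'''‖_{L²}`, and
`∫_a^b w² = (b - a)⁵ / 120`, so `‖w‖_{L²} / τ = τ^{3/2} / (2√30)`.
-/

open Set intervalIntegral MeasureTheory
open scoped ENNReal

noncomputable def trapezoidKernel (a b s : ℝ) : ℝ := (s - a) * (s - b) / 2

lemma continuous_trapezoidKernel (a b : ℝ) : Continuous (trapezoidKernel a b) := by
  unfold trapezoidKernel
  fun_prop

lemma hasDerivAt_trapezoidKernel (a b t : ℝ) :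
    HasDerivAt (trapezoidKernel a b) (t - (a + b) / 2) t :=
  ((((hasDerivAt_id t).sub_const a).mul ((hasDerivAt_id t).sub_const b)).div_const 2).congr_deriv
    (by simp only [id]; ring)

lemma integral_trapezoidKernel_sq (a b : ℝ) :
    ∫ s in a..b, trapezoidKernel a b s ^ 2 = (b - a) ^ 5 / 120 := by
  set P : ℝ → ℝ := fun s => (s - a) ^ 3 * (6 * (s - a) ^ 2 - 15 * (b - a) * (s - a)
    + 10 * (b - a) ^ 2) / 120
  have hP : ∀ s ∈ uIcc a b, HasDerivAt P (trapezoidKernel a b s ^ 2) s := by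
    intro s _
    have hu : HasDerivAt (fun u : ℝ => u - a) 1 s := (hasDerivAt_id s).sub_const a
    refine ((hu.pow 3).mul ((((hu.pow 2).const_mul 6).sub (hu.const_mul (15 * (b - a)))).add_const
      (10 * (b - a) ^ 2))).div_const 120 |>.congr_deriv ?_
    simp only [trapezoidKernel, Pi.pow_apply, Pi.sub_apply]
    push_cast
    ring
  rw [integral_eq_sub_of_hasDerivAt hP
    (((continuous_trapezoidKernel a b).pow 2).intervalIntegrable a b)]
  simp only [P]
  ring

theorem integral_trapezoidKernel_smul {E : Type*} [NormedAddCommGroup E] [NormedSpace ℝ E]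
    [CompleteSpace E] {a b : ℝ} (hab : a ≤ b) {f f' f'' f''' : ℝ → E}
    (hf : ∀ t ∈ Icc a b, HasDerivWithinAt f (f' t) (Icc a b) t)
    (hf' : ∀ t ∈ Icc a b, HasDerivWithinAt f' (f'' t) (Icc a b) t)
    (hf'' : ∀ t ∈ Icc a b, HasDerivWithinAt f'' (f''' t) (Icc a b) t)
    (hf''' : ContinuousOn f''' (Icc a b)) :
    ∫ s in a..b, trapezoidKernel a b s • f''' s
      = f b - f a - ((b - a) / 2) • (f' b + f' a) := by
  have hw := continuous_trapezoidKernel a b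
  have hc : ∀ {g g' : ℝ → E}, (∀ t ∈ Icc a b, HasDerivWithinAt g (g' t) (Icc a b) t) →
      ContinuousOn g (Icc a b) := fun h t ht => (h t ht).continuousWithinAt
  -- a primitive of `w • f'''`: the remaining terms of its derivative cancel because `w'' = 1`
  have hG : ∀ t ∈ Ioo a b, HasDerivAt
      (fun s => trapezoidKernel a b s • f'' s - (s - (a + b) / 2) • f' s + f s)
      (trapezoidKernel a b t • f''' t) t := by
    intro t ht
    have hnhds : Icc a b ∈ nhds t := Icc_mem_nhds ht.1 ht.2
    have hmem : t ∈ Icc a b := Ioo_subset_Icc_self ht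
    refine (((hasDerivAt_trapezoidKernel a b t).smul ((hf'' t hmem).hasDerivAt hnhds)).sub
      (((hasDerivAt_id' t).sub_const _).smul ((hf' t hmem).hasDerivAt hnhds))).add
      ((hf t hmem).hasDerivAt hnhds) |>.congr_deriv ?_
    module
  rw [integral_eq_sub_of_hasDerivAt_of_le hab
    (((hw.continuousOn.smul (hc hf'')).sub ((by fun_prop : Continuous fun s : ℝ =>
      s - (a + b) / 2).continuousOn.smul (hc hf'))).add (hc hf)) hG
    ((hw.continuousOn.smul hf''').intervalIntegrable_of_Icc hab)]
  simp only [Pi.add_apply, Pi.sub_apply, Pi.smul_apply', trapezoidKernel, sub_self, zero_mul,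
    mul_zero, zero_div, zero_smul]
  module

lemma ContinuousOn.memLp_restrict_Ioc {E : Type*} [NormedAddCommGroup E] {a b : ℝ} {h : ℝ → E}
    (hc : ContinuousOn h (Icc a b)) (p : ℝ≥0∞) : MemLp h p (volume.restrict (Ioc a b)) := by
  obtain ⟨C, hC⟩ := isCompact_Icc.exists_bound_of_continuousOn hc
  refine MemLp.of_bound ((hc.aestronglyMeasurable measurableSet_Icc).mono_measure
    (Measure.restrict_mono Ioc_subset_Icc_self le_rfl)) C ?_
  exact (ae_restrict_iff' measurableSet_Ioc).2
    (Filter.Eventually.of_forall fun x hx => hC x (Ioc_subset_Icc_self hx))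

lemma intervalIntegral.norm_integral_smul_le_L2_mul_L2 {E : Type*} [NormedAddCommGroup E]
    [NormedSpace ℝ E] {a b : ℝ} (hab : a ≤ b) {g : ℝ → ℝ} {F : ℝ → E}
    (hg : ContinuousOn g (Icc a b)) (hF : ContinuousOn F (Icc a b)) :
    ‖∫ s in a..b, g s • F s‖
      ≤ (∫ s in a..b, g s ^ 2) ^ ((1 : ℝ) / 2)
        * (∫ s in a..b, ‖F s‖ ^ 2) ^ ((1 : ℝ) / 2) := by
  have holder := integral_mul_le_Lp_mul_Lq_of_nonneg Real.HolderConjugate.two_two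
    (Filter.Eventually.of_forall fun x => abs_nonneg (g x))
    (Filter.Eventually.of_forall fun x => norm_nonneg (F x))
    (by simpa using hg.abs.memLp_restrict_Ioc 2)
    (by simpa using hF.norm.memLp_restrict_Ioc 2)
  simp only [Real.rpow_two, sq_abs, ← integral_of_le hab] at holder
  calc ‖∫ s in a..b, g s • F s‖ ≤ ∫ s in a..b, ‖g s • F s‖ :=
        norm_integral_le_integral_norm hab
    _ = ∫ s in a..b, |g s| * ‖F s‖ := by simp only [norm_smul, Real.norm_eq_abs]
    _ ≤ _ := holder

lemma one_div_mul_rpow_half_pow_five_div_120 {τ : ℝ} (hτ : 0 < τ) :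
    1 / τ * (τ ^ 5 / 120) ^ ((1 : ℝ) / 2) = τ ^ ((3 : ℝ) / 2) / (2 * Real.sqrt 30) := by
  have h120 : Real.sqrt 120 = 2 * Real.sqrt 30 := by
    rw [show (120 : ℝ) = 2 ^ 2 * 30 by norm_num, Real.sqrt_mul (by positivity),
      Real.sqrt_sq (by norm_num)]
  have h5 : Real.sqrt (τ ^ 5) = τ * τ ^ ((3 : ℝ) / 2) := by
    rw [Real.sqrt_eq_rpow, ← Real.rpow_natCast, ← Real.rpow_mul hτ.le,
      ← Real.rpow_one_add' hτ.le (by norm_num)]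
    norm_num
  rw [← Real.sqrt_eq_rpow, Real.sqrt_div' _ (by norm_num), h120, h5]
  field_simp

/-- L²-type bound for the Crank–Nicolson consistency error:
`‖(f(b) - f(a))/τ - (1/2)(f'(b) + f'(a))‖ ≤ (τ^{3/2}/(2√30)) (∫_a^b ‖f'''(s)‖² ds)^{1/2}`. -/
theorem crank_nicolson_consistency_L2_bound
    {E : Type*} [NormedAddCommGroup E] [NormedSpace ℝ E] [CompleteSpace E]
    (a b τ : ℝ) (hab : a < b) (hτ : τ = b - a)
    (f f' f'' f''' : ℝ → E)
    (hf : ∀ t ∈ Icc a b, HasDerivWithinAt f (f' t) (Icc a b) t)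
    (hf' : ∀ t ∈ Icc a b, HasDerivWithinAt f' (f'' t) (Icc a b) t)
    (hf'' : ∀ t ∈ Icc a b, HasDerivWithinAt f'' (f''' t) (Icc a b) t)
    (hf''' : ContinuousOn f''' (Icc a b)) :
    ‖(1 / τ) • (f b - f a) - (1 / 2 : ℝ) • (f' b + f' a)‖
      ≤ (τ ^ ((3 : ℝ) / 2) / (2 * Real.sqrt 30))
          * (∫ s in a..b, ‖f''' s‖ ^ 2) ^ ((1 : ℝ) / 2) := by
  subst hτ
  have hτ : 0 < b - a := sub_pos.2 hab
  have hpeano : (1 / (b - a)) • (f b - f a) - (1 / 2 : ℝ) • (f' b + f' a)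
      = (1 / (b - a)) • ∫ s in a..b, trapezoidKernel a b s • f''' s := by
    rw [integral_trapezoidKernel_smul hab.le hf hf' hf'' hf''', smul_sub _ (f b - f a),
      smul_smul]
    congr 2
    field_simp
  rw [hpeano, norm_smul, Real.norm_of_nonneg (by positivity)]
  calc 1 / (b - a) * ‖∫ s in a..b, trapezoidKernel a b s • f''' s‖
      ≤ 1 / (b - a) * ((∫ s in a..b, trapezoidKernel a b s ^ 2) ^ ((1 : ℝ) / 2)
          * (∫ s in a..b, ‖f''' s‖ ^ 2) ^ ((1 : ℝ) / 2)) :=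
        mul_le_mul_of_nonneg_left (norm_integral_smul_le_L2_mul_L2 hab.le
          (continuous_trapezoidKernel a b).continuousOn hf''') (by positivity)
    _ = _ := by
        rw [integral_trapezoidKernel_sq, ← mul_assoc, one_div_mul_rpow_half_pow_five_div_120 hτ]
end

section
/- Let V be a real inner product space, and let a : V × V → ℝ be a symmetric positive semidefinite bilinear form satisfying the Poincaré-type inequality ‖v‖² ≤ C₀ a(v,v) for all v ∈ V, where C₀ > 0. Let τ > 0, θ ≥ 1/2, and u⁰, u¹, F ∈ V with w = θ u¹ + (1-θ) u⁰. If ⟪(u¹ - u⁰)/τ, w⟫ + a(w, w) = ⟪F, w⟫, then ‖u¹‖² ≤ ‖u⁰‖² + (C₀ τ / 2) ‖F‖². -/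
open scoped RealInnerProductSpace

/-- One-step stability of the θ-scheme for `θ ≥ 1/2`:
`‖u¹‖² ≤ ‖u⁰‖² + (C₀ τ / 2) ‖F‖²`. -/
theorem theta_scheme_one_step_stability
    {V : Type*} [NormedAddCommGroup V] [InnerProductSpace ℝ V]
    (a : V →ₗ[ℝ] V →ₗ[ℝ] ℝ)
    (hsym : ∀ x y : V, a x y = a y x)
    (hpos : ∀ v : V, 0 ≤ a v v)
    (C₀ : ℝ) (hC₀ : 0 < C₀)
    (hpoincare : ∀ v : V, ‖v‖ ^ 2 ≤ C₀ * a v v)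
    (τ θ : ℝ) (hτ : 0 < τ) (hθ : 1 / 2 ≤ θ)
    (u0 u1 F w : V) (hw : w = θ • u1 + (1 - θ) • u0)
    (h : ⟪(1 / τ) • (u1 - u0), w⟫ + a w w = ⟪F, w⟫) :
    ‖u1‖ ^ 2 ≤ ‖u0‖ ^ 2 + (C₀ * τ / 2) * ‖F‖ ^ 2 := by
  have hin : ⟪u1 - u0, w⟫ =
      θ * ‖u1‖ ^ 2 + (1 - 2 * θ) * ⟪u1, u0⟫ - (1 - θ) * ‖u0‖ ^ 2 := by
    subst hw
    simp only [inner_sub_left, inner_add_right, real_inner_smul_right,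
      real_inner_self_eq_norm_sq, real_inner_comm u0 u1]
    ring
  have hCS : ⟪u1, u0⟫ ≤ ‖u1‖ * ‖u0‖ := real_inner_le_norm _ _
  have h1 : (1 / 2) * (‖u1‖ ^ 2 - ‖u0‖ ^ 2) ≤ ⟪u1 - u0, w⟫ := by
    rw [hin]
    nlinarith [sq_nonneg (‖u1‖ - ‖u0‖), hCS, hθ]
  have hFw : ⟪F, w⟫ ≤ ‖F‖ * ‖w‖ := real_inner_le_norm _ _
  have h2 : ⟪F, w⟫ - a w w ≤ C₀ * ‖F‖ ^ 2 / 4 := by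
    nlinarith [sq_nonneg (C₀ * ‖F‖ / 2 - ‖w‖), hpos w, hpoincare w, hC₀, hFw,
      norm_nonneg w, norm_nonneg F]
  have hsm : ⟪(1 / τ) • (u1 - u0), w⟫ = (1 / τ) * ⟪u1 - u0, w⟫ :=
    real_inner_smul_left _ _ _
  rw [hsm] at h
  have h3 : ⟪u1 - u0, w⟫ = τ * (⟪F, w⟫ - a w w) := by
    field_simp at h ⊢
    linarith
  nlinarith [h1, h2, h3, hτ]
end

section
/- Let V be a real inner product space, and let a : V × V → ℝ be a symmetric positive semidefinite bilinear form satisfying the Poincaré-type inequality ‖v‖² ≤ C₀ a(v,v) for all v ∈ V, where C₀ > 0. Let τ > 0, θ ∈ [1/2, 1], N ≥ 1, and let u⁰, u¹, …, u^N and F¹, …, F^N in V satisfy, for each n = 1, …, N and every v ∈ V, ⟪(uⁿ - u^{n-1})/τ, v⟫ + a(θ uⁿ + (1-θ) u^{n-1}, v) = ⟪Fⁿ, v⟫. Then ‖u^N‖² ≤ ‖u⁰‖² + (C₀ τ / 2) Σ_{j=1}^{N} ‖F^j‖². -/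
/-!
Testing the scheme with `w = θ uⁿ + (1 - θ) uⁿ⁻¹` gives
`⟪uⁿ - uⁿ⁻¹, w⟫ = (‖uⁿ‖² - ‖uⁿ⁻¹‖²) / 2 + (θ - 1/2) ‖uⁿ - uⁿ⁻¹‖²`, whose last term is nonnegative for
`θ ≥ 1/2`. Young's inequality and the Poincaré inequality bound `⟪Fⁿ, w⟫` by `(C₀/4) ‖Fⁿ‖² + a(w, w)`,
so the `a(w, w)` terms cancel and `‖uⁿ‖² ≤ ‖uⁿ⁻¹‖² + (C₀ τ / 2) ‖Fⁿ‖²`; summing over `n` telescopes.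
-/

open scoped RealInnerProductSpace

section Telescoping

variable {α : Type*} [AddCommMonoid α] [PartialOrder α] [IsOrderedAddMonoid α]

theorem le_add_sum_Icc_of_le_add {g c : ℕ → α} {N : ℕ}
    (h : ∀ n < N, g (n + 1) ≤ g n + c (n + 1)) :
    g N ≤ g 0 + ∑ j ∈ Finset.Icc 1 N, c j := by
  induction N with
  | zero => simp
  | succ N ih =>
    rw [Finset.sum_Icc_succ_top (Nat.le_add_left 1 N), ← add_assoc]
    calc g (N + 1) ≤ g N + c (N + 1) := h N N.lt_succ_self
      _ ≤ _ := add_le_add_left (ih fun n hn => h n (Nat.lt_succ_of_lt hn)) _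

end Telescoping

section ThetaScheme

variable {V : Type*} [NormedAddCommGroup V] [InnerProductSpace ℝ V]

theorem real_inner_sub_smul_add_one_sub_smul (x y : V) (θ : ℝ) :
    ⟪x - y, θ • x + (1 - θ) • y⟫ = (‖x‖ ^ 2 - ‖y‖ ^ 2) / 2 + (θ - 1 / 2) * ‖x - y‖ ^ 2 := by
  simp only [inner_sub_left, inner_add_right, real_inner_smul_right, real_inner_self_eq_norm_sq,
    norm_sub_sq_real, real_inner_comm x y]
  ring

theorem half_sub_norm_sq_le_real_inner_sub_smul_add_one_sub_smul (x y : V) {θ : ℝ}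
    (hθ : 1 / 2 ≤ θ) :
    (‖x‖ ^ 2 - ‖y‖ ^ 2) / 2 ≤ ⟪x - y, θ • x + (1 - θ) • y⟫ := by
  rw [real_inner_sub_smul_add_one_sub_smul]
  have : 0 ≤ (θ - 1 / 2) * ‖x - y‖ ^ 2 := mul_nonneg (by linarith) (sq_nonneg _)
  linarith

theorem real_inner_le_div_four_mul_norm_sq_add_norm_sq_div (x y : V) {c : ℝ} (hc : 0 < c) :
    ⟪x, y⟫ ≤ c / 4 * ‖x‖ ^ 2 + ‖y‖ ^ 2 / c := by
  have hxy : ⟪x, y⟫ ≤ ‖x‖ * ‖y‖ := real_inner_le_norm x y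
  rw [div_mul_eq_mul_div, div_add_div _ _ (by norm_num) hc.ne', le_div_iff₀ (by positivity)]
  nlinarith [sq_nonneg (c * ‖x‖ - 2 * ‖y‖)]

/-- `x` is obtained from `y` by one step of the θ-scheme with time step `τ` and source `f`. -/
def IsThetaStep (a : V →ₗ[ℝ] V →ₗ[ℝ] ℝ) (τ θ : ℝ) (f y x : V) : Prop :=
  ∀ v : V, ⟪(1 / τ) • (x - y), v⟫ + a (θ • x + (1 - θ) • y) v = ⟪f, v⟫

theorem IsThetaStep.norm_sq_le {a : V →ₗ[ℝ] V →ₗ[ℝ] ℝ} {C₀ τ θ : ℝ} {f y x : V}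
    (hstep : IsThetaStep a τ θ f y x) (hC₀ : 0 < C₀) (hpoincare : ∀ v : V, ‖v‖ ^ 2 ≤ C₀ * a v v)
    (hτ : 0 < τ) (hθ : 1 / 2 ≤ θ) :
    ‖x‖ ^ 2 ≤ ‖y‖ ^ 2 + C₀ * τ / 2 * ‖f‖ ^ 2 := by
  set w := θ • x + (1 - θ) • y
  have htest : ⟪x - y, w⟫ / τ + a w w = ⟪f, w⟫ := by
    rw [← hstep w, real_inner_smul_left, one_div, inv_mul_eq_div]
  have hcoercive : ‖w‖ ^ 2 / C₀ ≤ a w w := by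
    rw [div_le_iff₀ hC₀, mul_comm]
    exact hpoincare w
  have hyoung := real_inner_le_div_four_mul_norm_sq_add_norm_sq_div f w hC₀
  have henergy : ⟪x - y, w⟫ ≤ C₀ / 4 * ‖f‖ ^ 2 * τ := by
    rw [← div_le_iff₀ hτ]
    linarith
  have hhalf := half_sub_norm_sq_le_real_inner_sub_smul_add_one_sub_smul x y hθ
  linarith

end ThetaScheme

theorem theta_scheme_stability_squared_general
    {V : Type*} [NormedAddCommGroup V] [InnerProductSpace ℝ V]
    (a : V →ₗ[ℝ] V →ₗ[ℝ] ℝ)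
    (C₀ : ℝ) (hC₀ : 0 < C₀)
    (hpoincare : ∀ v : V, ‖v‖ ^ 2 ≤ C₀ * a v v)
    (τ θ : ℝ) (hτ : 0 < τ) (hθ : θ ∈ Set.Icc (1 / 2 : ℝ) 1)
    (N : ℕ) (u F : ℕ → V)
    (hscheme : ∀ n, 1 ≤ n → n ≤ N → ∀ v : V,
      ⟪(1 / τ) • (u n - u (n - 1)), v⟫ + a (θ • u n + (1 - θ) • u (n - 1)) v
        = ⟪F n, v⟫) :
    ‖u N‖ ^ 2 ≤ ‖u 0‖ ^ 2 + (C₀ * τ / 2) * ∑ j ∈ Finset.Icc 1 N, ‖F j‖ ^ 2 := by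
  rw [Finset.mul_sum]
  refine le_add_sum_Icc_of_le_add (g := fun n => ‖u n‖ ^ 2) fun n hn => ?_
  have hstep : IsThetaStep a τ θ (F (n + 1)) (u n) (u (n + 1)) := fun v => by
    simpa only [Nat.add_sub_cancel] using hscheme (n + 1) (Nat.le_add_left 1 n) hn v
  exact hstep.norm_sq_le hC₀ hpoincare hτ hθ.1

/-- Discrete stability of the implicit θ-scheme, `θ ∈ [1/2, 1]`:
`‖u^N‖² ≤ ‖u⁰‖² + (C₀ τ / 2) Σ_{j=1}^N ‖F^j‖²`. -/
theorem theta_scheme_stability_squared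
    {V : Type*} [NormedAddCommGroup V] [InnerProductSpace ℝ V]
    (a : V →ₗ[ℝ] V →ₗ[ℝ] ℝ)
    (hsym : ∀ x y : V, a x y = a y x)
    (hpos : ∀ v : V, 0 ≤ a v v)
    (C₀ : ℝ) (hC₀ : 0 < C₀)
    (hpoincare : ∀ v : V, ‖v‖ ^ 2 ≤ C₀ * a v v)
    (τ θ : ℝ) (hτ : 0 < τ) (hθ : θ ∈ Set.Icc (1 / 2 : ℝ) 1)
    (N : ℕ) (hN : 1 ≤ N) (u F : ℕ → V)
    (hscheme : ∀ n, 1 ≤ n → n ≤ N → ∀ v : V,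
      ⟪(1 / τ) • (u n - u (n - 1)), v⟫ + a (θ • u n + (1 - θ) • u (n - 1)) v
        = ⟪F n, v⟫) :
    ‖u N‖ ^ 2 ≤ ‖u 0‖ ^ 2 + (C₀ * τ / 2) * ∑ j ∈ Finset.Icc 1 N, ‖F j‖ ^ 2 :=
  theta_scheme_stability_squared_general a C₀ hC₀ hpoincare τ θ hτ hθ N u F hscheme
end

section
/- (Unconditional stability of the θ-scheme.) Let V be a real inner product space, and let a : V × V → ℝ be a symmetric positive semidefinite bilinear form satisfying the Poincaré-type inequality ‖v‖² ≤ C₀ a(v,v) for all v ∈ V, where C₀ > 0. Let τ > 0, θ ∈ [1/2, 1], N ≥ 1, and let u⁰, …, u^N and F¹, …, F^N in V satisfy, for each n = 1, …, N and every v ∈ V, ⟪(uⁿ - u^{n-1})/τ, v⟫ + a(θ uⁿ + (1-θ) u^{n-1}, v) = ⟪Fⁿ, v⟫. Then ‖u^N‖ ≤ ‖u⁰‖ + (C₀ N τ / 2)^{1/2} max_{1 ≤ j ≤ N} ‖F^j‖; in particular the scheme is unconditionally stable. -/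
open scoped RealInnerProductSpace

/-- Unconditional stability of the implicit θ-scheme, `θ ∈ [1/2, 1]`:
`‖u^N‖ ≤ ‖u⁰‖ + (C₀ N τ / 2)^{1/2} max_{1 ≤ j ≤ N} ‖F^j‖`. -/
theorem theta_scheme_unconditional_stability
    {V : Type*} [NormedAddCommGroup V] [InnerProductSpace ℝ V]
    (a : V →ₗ[ℝ] V →ₗ[ℝ] ℝ)
    (hsym : ∀ x y : V, a x y = a y x)
    (hpos : ∀ v : V, 0 ≤ a v v)
    (C₀ : ℝ) (hC₀ : 0 < C₀)
    (hpoincare : ∀ v : V, ‖v‖ ^ 2 ≤ C₀ * a v v)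
    (τ θ : ℝ) (hτ : 0 < τ) (hθ : θ ∈ Set.Icc (1 / 2 : ℝ) 1)
    (N : ℕ) (hN : 1 ≤ N) (u F : ℕ → V)
    (hscheme : ∀ n, 1 ≤ n → n ≤ N → ∀ v : V,
      ⟪(1 / τ) • (u n - u (n - 1)), v⟫ + a (θ • u n + (1 - θ) • u (n - 1)) v
        = ⟪F n, v⟫) :
    ‖u N‖ ≤ ‖u 0‖
      + Real.sqrt (C₀ * N * τ / 2)
          * (Finset.Icc 1 N).sup' (Finset.nonempty_Icc.mpr hN) (fun j => ‖F j‖) := by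
  obtain ⟨hθ1, hθ2⟩ := hθ
  set M : ℝ := (Finset.Icc 1 N).sup' (Finset.nonempty_Icc.mpr hN) (fun j => ‖F j‖) with hM
  have hM0 : 0 ≤ M := le_trans (norm_nonneg (F 1))
    (Finset.le_sup' (fun j => ‖F j‖) (by simp [hN] : (1:ℕ) ∈ Finset.Icc 1 N))
  -- one-step energy estimate
  have key : ∀ n, 1 ≤ n → n ≤ N →
      ‖u n‖ ^ 2 ≤ ‖u (n - 1)‖ ^ 2 + (C₀ * τ / 2) * ‖F n‖ ^ 2 := by
    intro n h1 h2
    set w : V := θ • u n + (1 - θ) • u (n - 1) with hw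
    have heq := hscheme n h1 h2 w
    rw [real_inner_smul_left] at heq
    have hin : ⟪u n - u (n - 1), w⟫
        = θ * ‖u n‖ ^ 2 - (1 - θ) * ‖u (n - 1)‖ ^ 2
          + (1 - 2 * θ) * ⟪u n, u (n - 1)⟫ := by
      simp only [hw, inner_sub_left, inner_add_right, real_inner_smul_right,
        real_inner_self_eq_norm_sq, real_inner_comm (u (n - 1)) (u n)]
      ring
    have hd : ‖u n - u (n - 1)‖ ^ 2
        = ‖u n‖ ^ 2 - 2 * ⟪u n, u (n - 1)⟫ + ‖u (n - 1)‖ ^ 2 := by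
      rw [← real_inner_self_eq_norm_sq, inner_sub_sub_self]
      simp only [real_inner_self_eq_norm_sq, real_inner_comm (u (n - 1)) (u n)]
      ring
    have hexact : ⟪u n - u (n - 1), w⟫
        = (‖u n‖ ^ 2 - ‖u (n - 1)‖ ^ 2) / 2
          + (θ - 1 / 2) * ‖u n - u (n - 1)‖ ^ 2 := by
      rw [hin, hd]; ring
    have hmono : (‖u n‖ ^ 2 - ‖u (n - 1)‖ ^ 2) / 2 ≤ ⟪u n - u (n - 1), w⟫ := by
      rw [hexact]
      nlinarith [sq_nonneg ‖u n - u (n - 1)‖]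
    have hcs : ⟪F n, w⟫ ≤ ‖F n‖ * ‖w‖ := real_inner_le_norm _ _
    have hpw := hpoincare w
    have hest : ⟪F n, w⟫ - a w w ≤ C₀ * ‖F n‖ ^ 2 / 4 := by
      nlinarith [sq_nonneg (2 * ‖w‖ - C₀ * ‖F n‖), norm_nonneg (F n), norm_nonneg w]
    have h5 : (1 / τ) * ⟪u n - u (n - 1), w⟫ ≤ C₀ * ‖F n‖ ^ 2 / 4 := by
      linarith
    have h6 : ⟪u n - u (n - 1), w⟫ ≤ τ * (C₀ * ‖F n‖ ^ 2 / 4) := by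
      rw [one_div, inv_mul_le_iff₀ hτ] at h5
      linarith [h5]
    nlinarith [hmono, h6]
  -- telescoping bound
  have bound : ∀ n, n ≤ N →
      ‖u n‖ ^ 2 ≤ ‖u 0‖ ^ 2 + (C₀ * τ / 2) * n * M ^ 2 := by
    intro n
    induction n with
    | zero => intro _; simp
    | succ k ih =>
      intro hk
      have hk' : k ≤ N := by omega
      have hkey := key (k + 1) (by omega) hk
      have hFM : ‖F (k + 1)‖ ≤ M :=
        Finset.le_sup' (fun j => ‖F j‖) (by simp; omega : k + 1 ∈ Finset.Icc 1 N)
      simp only [Nat.add_sub_cancel] at hkey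
      have hF2 : ‖F (k + 1)‖ ^ 2 ≤ M ^ 2 := by
        nlinarith [norm_nonneg (F (k + 1))]
      have := ih hk'
      push_cast
      nlinarith [mul_pos hC₀ hτ]
  have hNb := bound N le_rfl
  set s : ℝ := Real.sqrt (C₀ * N * τ / 2) with hs
  have hs0 : 0 ≤ s := Real.sqrt_nonneg _
  have hs2 : s ^ 2 = C₀ * N * τ / 2 := Real.sq_sqrt (by positivity)
  clear_value s
  have hsq : ‖u N‖ ^ 2 ≤ (‖u 0‖ + s * M) ^ 2 := by
    have expand : (‖u 0‖ + s * M) ^ 2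
        = ‖u 0‖ ^ 2 + 2 * (s * M) * ‖u 0‖ + s ^ 2 * M ^ 2 := by ring
    have hcross : 0 ≤ 2 * (s * M) * ‖u 0‖ :=
      mul_nonneg (by positivity) (norm_nonneg _)
    have : C₀ * τ / 2 * (N : ℝ) * M ^ 2 = s ^ 2 * M ^ 2 := by rw [hs2]; ring
    rw [expand]
    linarith [hNb, this]
  have hrhs : (0:ℝ) ≤ ‖u 0‖ + s * M := by positivity
  exact (pow_le_pow_iff_left₀ (norm_nonneg _) hrhs two_ne_zero).mp hsq
end

section
/- Let V be a real inner product space, and let a : V × V → ℝ be a symmetric positive semidefinite continuous bilinear form satisfying the Poincaré-type inequality ‖v‖² ≤ C₀ a(v,v) for all v ∈ V, where C₀ > 0. Let T > 0 and let η, ρ : [0,T] → V be continuously differentiable (in the norm of V) and satisfy, for all t ∈ [0,T] and all v ∈ V, ⟪η'(t), v⟫ + a(η(t), v) = -⟪ρ'(t), v⟫. Then for every t ∈ [0,T], ‖η(t)‖² ≤ ‖η(0)‖² + (C₀/2) ∫₀^t ‖ρ'(s)‖² ds. -/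
open Set intervalIntegral
open scoped RealInnerProductSpace

/-- Semidiscrete L² error estimate: if `⟪η', v⟫ + a(η, v) = -⟪ρ', v⟫` on `[0,T]`,
then `‖η(t)‖² ≤ ‖η(0)‖² + (C₀/2) ∫₀ᵗ ‖ρ'(s)‖² ds`. -/
theorem semidiscrete_L2_stability
    {V : Type*} [NormedAddCommGroup V] [InnerProductSpace ℝ V]
    (a : V →ₗ[ℝ] V →ₗ[ℝ] ℝ)
    (hsym : ∀ x y : V, a x y = a y x)
    (hpos : ∀ v : V, 0 ≤ a v v)
    (hacont : Continuous fun p : V × V => a p.1 p.2)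
    (C₀ : ℝ) (hC₀ : 0 < C₀)
    (hpoincare : ∀ v : V, ‖v‖ ^ 2 ≤ C₀ * a v v)
    (T : ℝ) (hT : 0 < T)
    (η η' ρ ρ' : ℝ → V)
    (hη : ∀ t ∈ Icc (0 : ℝ) T, HasDerivWithinAt η (η' t) (Icc 0 T) t)
    (hη' : ContinuousOn η' (Icc 0 T))
    (hρ : ∀ t ∈ Icc (0 : ℝ) T, HasDerivWithinAt ρ (ρ' t) (Icc 0 T) t)
    (hρ' : ContinuousOn ρ' (Icc 0 T))
    (heq : ∀ t ∈ Icc (0 : ℝ) T, ∀ v : V, ⟪η' t, v⟫ + a (η t) v = -⟪ρ' t, v⟫) :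
    ∀ t ∈ Icc (0 : ℝ) T,
      ‖η t‖ ^ 2 ≤ ‖η 0‖ ^ 2 + (C₀ / 2) * ∫ s in (0 : ℝ)..t, ‖ρ' s‖ ^ 2 := by
  intro t ht
  obtain ⟨ht0, htT⟩ := ht
  have hsub : Icc (0:ℝ) t ⊆ Icc 0 T := Icc_subset_Icc le_rfl htT
  have hηc : ContinuousOn η (Icc 0 T) := fun s hs => (hη s hs).continuousWithinAt
  set φ : ℝ → ℝ := fun s => 2 * ⟪η' s, η s⟫ with hφdef
  have hφc : ContinuousOn φ (Icc 0 T) :=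
    continuousOn_const.mul (hη'.inner hηc)
  set g : ℝ → ℝ := fun s => C₀ / 2 * ‖ρ' s‖ ^ 2 with hgdef
  have hgc : ContinuousOn g (Icc 0 T) :=
    continuousOn_const.mul ((hρ'.norm).pow 2)
  -- pointwise bound φ s ≤ g s
  have key : ∀ s ∈ Icc (0:ℝ) T, φ s ≤ g s := by
    intro s hs
    have h1 := heq s hs (η s)
    have h2 : -⟪ρ' s, η s⟫ ≤ ‖ρ' s‖ * ‖η s‖ := by
      have := abs_real_inner_le_norm (ρ' s) (η s)
      have := neg_abs_le (⟪ρ' s, η s⟫)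
      linarith
    have h3 := hpoincare (η s)
    have h4 := hpos (η s)
    have h5 : ⟪η' s, η s⟫ = -a (η s) (η s) - ⟪ρ' s, η s⟫ := by linarith
    have hnn1 : (0:ℝ) ≤ ‖ρ' s‖ := norm_nonneg _
    have hnn2 : (0:ℝ) ≤ ‖η s‖ := norm_nonneg _
    simp only [hφdef, hgdef, h5]
    nlinarith [sq_nonneg (C₀ * ‖ρ' s‖ - 2 * ‖η s‖), mul_pos hC₀ hC₀]
  -- FTC: ∫ φ = ‖η t‖² - ‖η 0‖²
  have hderiv : ∀ x ∈ Ioo (0:ℝ) t, HasDerivAt (fun s => ‖η s‖ ^ 2) (φ x) x := by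
    intro x hx
    have hxT : x ∈ Icc (0:ℝ) T := hsub (Ioo_subset_Icc_self hx)
    have hnhds : Icc (0:ℝ) T ∈ nhds x := by
      apply Icc_mem_nhds hx.1 (lt_of_lt_of_le hx.2 htT)
    have hd : HasDerivAt η (η' x) x := (hη x hxT).hasDerivAt hnhds
    have : HasDerivAt (fun s => (⟪η s, η s⟫ : ℝ)) (⟪η x, η' x⟫ + ⟪η' x, η x⟫) x :=
      hd.inner ℝ hd
    have heq2 : ⟪η x, η' x⟫ + ⟪η' x, η x⟫ = φ x := by
      simp [hφdef, real_inner_comm]; ring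
    rw [heq2] at this
    convert this using 1
    ext s
    rw [real_inner_self_eq_norm_sq]
  have hφint : IntervalIntegrable φ MeasureTheory.volume 0 t := by
    apply ContinuousOn.intervalIntegrable
    rw [uIcc_of_le ht0]; exact hφc.mono hsub
  have hgint : IntervalIntegrable g MeasureTheory.volume 0 t := by
    apply ContinuousOn.intervalIntegrable
    rw [uIcc_of_le ht0]; exact hgc.mono hsub
  have hFTC : ∫ s in (0:ℝ)..t, φ s = ‖η t‖ ^ 2 - ‖η 0‖ ^ 2 := by
    apply intervalIntegral.integral_eq_sub_of_hasDeriv_right_of_le ht0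
    · exact ((hηc.mono hsub).norm.pow 2).congr (fun s hs => rfl)
    · intro x hx
      exact (hderiv x hx).hasDerivWithinAt
    · exact hφint
  have hmono : ∫ s in (0:ℝ)..t, φ s ≤ ∫ s in (0:ℝ)..t, g s := by
    apply intervalIntegral.integral_mono_on ht0 hφint hgint
    intro s hs
    exact key s (hsub hs)
  have hconst : ∫ s in (0:ℝ)..t, g s = C₀ / 2 * ∫ s in (0:ℝ)..t, ‖ρ' s‖ ^ 2 :=
    intervalIntegral.integral_const_mul _ _
  linarith
end

section
/- Let V be a real inner product space, and let a : V × V → ℝ be a symmetric positive semidefinite continuous bilinear form. Let T > 0 and let η, ρ : [0,T] → V be continuously differentiable (in the norm of V) and satisfy, for all t ∈ [0,T] and all v ∈ V, ⟪η'(t), v⟫ + a(η(t), v) = -⟪ρ'(t), v⟫. Then for every t ∈ [0,T], a(η(t), η(t)) ≤ a(η(0), η(0)) + ∫₀^t ‖ρ'(s)‖² ds. -/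
open Set intervalIntegral
open scoped RealInnerProductSpace

/-!
By symmetry of `a`, the energy `E(t) = a(η t, η t)` has derivative `2 a(η t, η' t)`. Testing the
equation with `v = η' t` gives `2 a(η, η') = -2‖η'‖² - 2⟪ρ', η'⟫ = ‖ρ'‖² - ‖ρ' + η'‖² - ‖η'‖²
≤ ‖ρ'‖²`, and integrating this differential inequality from `0` to `t` gives the bound.
-/

namespace LinearMap

variable {𝕜 E F G : Type*} [NontriviallyNormedField 𝕜]
  [NormedAddCommGroup E] [NormedSpace 𝕜 E] [NormedAddCommGroup F] [NormedSpace 𝕜 F]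
  [NormedAddCommGroup G] [NormedSpace 𝕜 G]

def toContinuousLinearMap₂ (f : E →ₗ[𝕜] F →ₗ[𝕜] G)
    (hf : Continuous fun p : E × F => f p.1 p.2) : E →L[𝕜] F →L[𝕜] G :=
  let f' : E →ₗ[𝕜] F →L[𝕜] G :=
    { toFun := fun x => ⟨f x, hf.comp (.prodMk_right x)⟩
      map_add' := fun x y => by ext; simp
      map_smul' := fun c x => by ext; simp }
  ⟨f', ContinuousLinearMap.continuous_of_continuous_uncurry f' hf⟩

end LinearMap

theorem ContinuousLinearMap.hasDerivWithinAt_diag_of_symm {E : Type*} [NormedAddCommGroup E]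
    [NormedSpace ℝ E] {B : E →L[ℝ] E →L[ℝ] ℝ} (hB : ∀ x y, B x y = B y x)
    {u : ℝ → E} {u' : E} {s : Set ℝ} {t : ℝ} (hu : HasDerivWithinAt u u' s t) :
    HasDerivWithinAt (fun τ => B (u τ) (u τ)) (2 * B (u t) u') s t :=
  (B.hasDerivWithinAt_of_bilinear hu hu).congr_deriv (by rw [hB u' (u t)]; ring)

theorem two_mul_le_norm_sq_of_inner_self_add_eq_neg_inner {V : Type*} [NormedAddCommGroup V]
    [InnerProductSpace ℝ V] {x r : V} {c : ℝ} (h : ⟪x, x⟫ + c = -⟪r, x⟫) :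
    2 * c ≤ ‖r‖ ^ 2 := by
  have := norm_add_sq_real r x
  rw [real_inner_self_eq_norm_sq] at h
  nlinarith [sq_nonneg ‖r + x‖, sq_nonneg ‖x‖]

theorem semidiscrete_energy_stability_general
    {V : Type*} [NormedAddCommGroup V] [InnerProductSpace ℝ V]
    (a : V →ₗ[ℝ] V →ₗ[ℝ] ℝ)
    (hsym : ∀ x y : V, a x y = a y x)
    (hacont : Continuous fun p : V × V => a p.1 p.2)
    (T : ℝ)
    (η η' ρ' : ℝ → V)
    (hη : ∀ t ∈ Icc (0 : ℝ) T, HasDerivWithinAt η (η' t) (Icc 0 T) t)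
    (hρ' : ContinuousOn ρ' (Icc 0 T))
    (heq : ∀ t ∈ Icc (0 : ℝ) T, ∀ v : V, ⟪η' t, v⟫ + a (η t) v = -⟪ρ' t, v⟫) :
    ∀ t ∈ Icc (0 : ℝ) T,
      a (η t) (η t) ≤ a (η 0) (η 0) + ∫ s in (0 : ℝ)..t, ‖ρ' s‖ ^ 2 := by
  rintro t ⟨ht0, htT⟩
  have hsub : Icc 0 t ⊆ Icc 0 T := Icc_subset_Icc_right htT
  let B := a.toContinuousLinearMap₂ hacont
  have henergy : ∀ s ∈ Icc 0 T,
      HasDerivWithinAt (fun τ => a (η τ) (η τ)) (2 * a (η s) (η' s)) (Icc 0 T) s :=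
    fun s hs => B.hasDerivWithinAt_diag_of_symm hsym (hη s hs)
  have hcont : ContinuousOn (fun τ => a (η τ) (η τ)) (Icc 0 t) :=
    fun s hs => (henergy s (hsub hs)).continuousWithinAt.mono hsub
  have hderiv : ∀ s ∈ Ioo 0 t,
      HasDerivWithinAt (fun τ => a (η τ) (η τ)) (2 * a (η s) (η' s)) (Ioi s) s :=
    fun s hs => ((henergy s (hsub (Ioo_subset_Icc_self hs))).hasDerivAt
      (Icc_mem_nhds hs.1 (hs.2.trans_le htT))).hasDerivWithinAt
  have hint : MeasureTheory.IntegrableOn (fun s => ‖ρ' s‖ ^ 2) (Icc 0 t) :=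
    ((hρ'.mono hsub).norm.pow 2).integrableOn_Icc
  have hbound : ∀ s ∈ Ioo 0 t, 2 * a (η s) (η' s) ≤ ‖ρ' s‖ ^ 2 := fun s hs =>
    two_mul_le_norm_sq_of_inner_self_add_eq_neg_inner
      (heq s (hsub (Ioo_subset_Icc_self hs)) (η' s))
  linarith [sub_le_integral_of_hasDeriv_right_of_le ht0 hcont hderiv hint hbound]

/-- Semidiscrete energy-norm error estimate: if `⟪η', v⟫ + a(η, v) = -⟪ρ', v⟫` on `[0,T]`,
then `a(η(t), η(t)) ≤ a(η(0), η(0)) + ∫₀ᵗ ‖ρ'(s)‖² ds`. -/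
theorem semidiscrete_energy_stability
    {V : Type*} [NormedAddCommGroup V] [InnerProductSpace ℝ V]
    (a : V →ₗ[ℝ] V →ₗ[ℝ] ℝ)
    (hsym : ∀ x y : V, a x y = a y x)
    (hpos : ∀ v : V, 0 ≤ a v v)
    (hacont : Continuous fun p : V × V => a p.1 p.2)
    (T : ℝ) (hT : 0 < T)
    (η η' ρ ρ' : ℝ → V)
    (hη : ∀ t ∈ Icc (0 : ℝ) T, HasDerivWithinAt η (η' t) (Icc 0 T) t)
    (hη' : ContinuousOn η' (Icc 0 T))
    (hρ : ∀ t ∈ Icc (0 : ℝ) T, HasDerivWithinAt ρ (ρ' t) (Icc 0 T) t)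
    (hρ' : ContinuousOn ρ' (Icc 0 T))
    (heq : ∀ t ∈ Icc (0 : ℝ) T, ∀ v : V, ⟪η' t, v⟫ + a (η t) v = -⟪ρ' t, v⟫) :
    ∀ t ∈ Icc (0 : ℝ) T,
      a (η t) (η t) ≤ a (η 0) (η 0) + ∫ s in (0 : ℝ)..t, ‖ρ' s‖ ^ 2 :=
  semidiscrete_energy_stability_general a hsym hacont T η η' ρ' hη hρ' heq
end

section
/- Let V be a real inner product space, and let a : V × V → ℝ be a symmetric positive semidefinite bilinear form. Let τ > 0, θ ≥ 1/2, and η⁰, η¹, r ∈ V. If for every v ∈ V one has ⟪(η¹ - η⁰)/τ, v⟫ + a(θ η¹ + (1-θ) η⁰, v) = ⟪r, v⟫, then a(η¹, η¹) ≤ a(η⁰, η⁰) + τ ‖r‖². -/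
open scoped RealInnerProductSpace

/-!
Test the scheme with `v = η¹ - η⁰`. For a symmetric form,
`2 a(θ η¹ + (1-θ) η⁰, η¹ - η⁰) = a(η¹,η¹) - a(η⁰,η⁰) + (2θ - 1) a(η¹ - η⁰, η¹ - η⁰)`,
and the last term is nonnegative for `θ ≥ 1/2`. Cauchy–Schwarz and Young's inequality then
absorb `⟪r, η¹ - η⁰⟫` into the term `‖η¹ - η⁰‖² / τ` at the cost of `τ ‖r‖² / 4`.
-/

theorem LinearMap.two_mul_apply_smul_add_one_sub_smul_sub {R M : Type*} [CommRing R]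
    [AddCommGroup M] [Module R M] (a : M →ₗ[R] M →ₗ[R] R) (hsym : ∀ x y : M, a x y = a y x)
    (θ : R) (x y : M) :
    2 * a (θ • x + (1 - θ) • y) (x - y) = a x x - a y y + (2 * θ - 1) * a (x - y) (x - y) := by
  simp only [map_add, map_sub, map_smul, LinearMap.add_apply, LinearMap.sub_apply,
    LinearMap.smul_apply, smul_eq_mul]
  rw [hsym y x]
  ring

theorem mul_sub_sq_div_le {τ : ℝ} (hτ : 0 < τ) (s t : ℝ) : t * s - s ^ 2 / τ ≤ τ * t ^ 2 / 4 := by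
  have key : 0 ≤ (s - τ * t / 2) ^ 2 / τ := by positivity
  have expand : (s - τ * t / 2) ^ 2 / τ = s ^ 2 / τ - t * s + τ * t ^ 2 / 4 := by
    field_simp
    ring
  linarith

/-- One-step energy-norm estimate for the θ-scheme error recursion, `θ ≥ 1/2`:
`a(η¹, η¹) ≤ a(η⁰, η⁰) + τ ‖r‖²`. -/
theorem theta_scheme_one_step_energy_estimate
    {V : Type*} [NormedAddCommGroup V] [InnerProductSpace ℝ V]
    (a : V →ₗ[ℝ] V →ₗ[ℝ] ℝ)
    (hsym : ∀ x y : V, a x y = a y x)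
    (hpos : ∀ v : V, 0 ≤ a v v)
    (τ θ : ℝ) (hτ : 0 < τ) (hθ : 1 / 2 ≤ θ)
    (η0 η1 r : V)
    (h : ∀ v : V, ⟪(1 / τ) • (η1 - η0), v⟫ + a (θ • η1 + (1 - θ) • η0) v = ⟪r, v⟫) :
    a η1 η1 ≤ a η0 η0 + τ * ‖r‖ ^ 2 := by
  have htest := h (η1 - η0)
  rw [real_inner_smul_left, real_inner_self_eq_norm_sq, one_div_mul_eq_div] at htest
  have hsplit := a.two_mul_apply_smul_add_one_sub_smul_sub hsym θ η1 η0
  have hdiss : 0 ≤ (2 * θ - 1) * a (η1 - η0) (η1 - η0) :=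
    mul_nonneg (by linarith) (hpos _)
  have hcs := real_inner_le_norm r (η1 - η0)
  have hyoung := mul_sub_sq_div_le hτ ‖η1 - η0‖ ‖r‖
  have hr : 0 ≤ τ * ‖r‖ ^ 2 := by positivity
  linarith
end

section
/- (Abstract second-order convergence of the Crank–Nicolson scheme in the L² norm.) Let V be a real inner product space, and let a : V × V → ℝ be a symmetric positive semidefinite bilinear form satisfying ‖v‖² ≤ C₀ a(v,v) for all v ∈ V, with C₀ > 0. Let τ > 0, N ≥ 1, T = Nτ, tⁿ = nτ. Let u : [0,T] → V be three times continuously differentiable and ρ : [0,T] → V continuously differentiable (in the norm of V), and suppose η⁰, …, η^N ∈ V satisfy, for each n = 1, …, N and every v ∈ V, ⟪(ηⁿ - η^{n-1})/τ, v⟫ + a((ηⁿ + η^{n-1})/2, v) = -⟪(ρ(tⁿ) - ρ(t^{n-1}))/τ, v⟫ + ⟪(u(tⁿ) - u(t^{n-1}))/τ - (u'(tⁿ) + u'(t^{n-1}))/2, v⟫. Then ‖η^N‖² ≤ ‖η⁰‖² + C₀ ∫₀^T ‖ρ'(s)‖² ds + (C₀ τ⁴ / 120) ∫₀^T ‖u'''(s)‖²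 ds. -/
/-!
Testing the scheme with `w = ηⁿ + ηⁿ⁻¹` gives the energy identity
`‖ηⁿ‖² - ‖ηⁿ⁻¹‖² + (τ/2) a(w,w) = -⟪ρ(tⁿ) - ρ(tⁿ⁻¹), w⟫ + ⟪e, w⟫`, where `e` is the trapezoidal
error of `u` on `[tⁿ⁻¹, tⁿ]`. The first pairing is `∫ ⟪ρ', w⟫`, the second has the Peano-kernel form
`-½ ∫ (t - tⁿ⁻¹)(tⁿ - t) ⟪u'''(t), w⟫ dt` with `∫ kernel² = τ⁵/30`. Weighted Young inequalities
bound both by the integrals in the claim plus `τ‖w‖²/(2C₀)`, which the Poincaré inequality absorbs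
into `(τ/2) a(w,w)`; summing the one-step bounds telescopes. Since `V` need not be complete, only
real-valued pairings `⟪·, w⟫` are ever integrated.
-/

open Set intervalIntegral
open scoped RealInnerProductSpace

theorem integral_eq_sub_of_hasDerivWithinAt_Icc_s15 {E : Type*} [NormedAddCommGroup E]
    [NormedSpace ℝ E] [CompleteSpace E] {f f' : ℝ → E} {A B : ℝ} (hAB : A ≤ B)
    (hf : ∀ t ∈ Icc A B, HasDerivWithinAt f (f' t) (Icc A B) t)
    (hf' : ContinuousOn f' (Icc A B)) :
    ∫ t in A..B, f' t = f B - f A :=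
  integral_eq_sub_of_hasDerivAt_of_le hAB (fun t ht => (hf t ht).continuousWithinAt)
    (fun t ht => (hf t (Ioo_subset_Icc_self ht)).hasDerivAt (Icc_mem_nhds ht.1 ht.2))
    (hf'.intervalIntegrable_of_Icc hAB)

theorem peano_kernel_sq_integral (A B : ℝ) :
    ∫ t in A..B, ((t - A) * (B - t)) ^ 2 = (B - A) ^ 5 / 30 := by
  have hderiv (t : ℝ) : HasDerivAt
      (fun t => (B - A) ^ 2 * (t - A) ^ 3 / 3 - (B - A) * (t - A) ^ 4 / 2 + (t - A) ^ 5 / 5)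
      (((t - A) * (B - t)) ^ 2) t := by
    have hpow (k : ℕ) : HasDerivAt (fun t : ℝ => (t - A) ^ k) (k * (t - A) ^ (k - 1)) t := by
      simpa using ((hasDerivAt_id t).sub_const A).fun_pow k
    refine ((((hpow 3).const_mul ((B - A) ^ 2)).div_const 3).fun_sub
      (((hpow 4).const_mul (B - A)).div_const 2) |>.fun_add ((hpow 5).div_const 5)).congr_deriv ?_
    push_cast
    ring
  rw [integral_eq_sub_of_hasDerivAt (fun t _ => hderiv t)
    (Continuous.intervalIntegrable (by fun_prop) _ _)]
  ring

theorem trapezoid_error_eq_integral_peano_kernel {g g' g'' g''' : ℝ → ℝ} {A B : ℝ} (hAB : A ≤ B)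
    (hg : ∀ t ∈ Icc A B, HasDerivWithinAt g (g' t) (Icc A B) t)
    (hg' : ∀ t ∈ Icc A B, HasDerivWithinAt g' (g'' t) (Icc A B) t)
    (hg'' : ∀ t ∈ Icc A B, HasDerivWithinAt g'' (g''' t) (Icc A B) t)
    (hg''' : ContinuousOn g''' (Icc A B)) :
    g B - g A - (B - A) / 2 * (g' B + g' A)
      = -(1 / 2) * ∫ t in A..B, (t - A) * (B - t) * g''' t := by
  have hH : ∀ t ∈ Icc A B, HasDerivWithinAt
      (fun t => ((t - A) * (B - t) * g'' t - (A + B - 2 * t) * g' t) / 2 - g t)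
      ((1 / 2) * ((t - A) * (B - t) * g''' t)) (Icc A B) t := by
    intro t ht
    have hk : HasDerivAt (fun t => (t - A) * (B - t)) (A + B - 2 * t) t :=
      (((hasDerivAt_id t).sub_const A).fun_mul ((hasDerivAt_id t).const_sub B)).congr_deriv
        (by simp only [id_eq]; ring)
    have hl : HasDerivAt (fun t => A + B - 2 * t) (-2) t :=
      (((hasDerivAt_id t).const_mul 2).const_sub (A + B)).congr_deriv (by ring)
    exact (((hk.hasDerivWithinAt.fun_mul (hg'' t ht)).fun_sub
      (hl.hasDerivWithinAt.fun_mul (hg' t ht))).div_const 2).fun_sub (hg t ht) |>.congr_deriv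
        (by ring)
  have hFTC := integral_eq_sub_of_hasDerivWithinAt_Icc_s15 hAB hH
    (by fun_prop (disch := assumption))
  rw [integral_const_mul] at hFTC
  linear_combination hFTC

section InnerProductSpace

variable {V : Type*} [NormedAddCommGroup V] [InnerProductSpace ℝ V]

theorem HasDerivWithinAt.inner_const {f : ℝ → V} {f' : V} {s : Set ℝ} {t : ℝ}
    (hf : HasDerivWithinAt f f' s t) (w : V) :
    HasDerivWithinAt (fun s => ⟪f s, w⟫) ⟪f', w⟫ s t := by
  simpa using hf.inner ℝ (hasDerivWithinAt_const t s w)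

theorem real_inner_le_mul_norm_sq_add {c : ℝ} (hc : 0 < c) (x y : V) :
    ⟪x, y⟫ ≤ c * ‖x‖ ^ 2 + ‖y‖ ^ 2 / (4 * c) := by
  have hsq : c * ‖x‖ ^ 2 + ‖y‖ ^ 2 / (4 * c) - ‖x‖ * ‖y‖
      = (2 * c * ‖x‖ - ‖y‖) ^ 2 / (4 * c) := by
    field_simp
    ring
  have hsq_nonneg : 0 ≤ (2 * c * ‖x‖ - ‖y‖) ^ 2 / (4 * c) := by positivity
  linarith [real_inner_le_norm x y]

variable {A B c : ℝ}

theorem inner_sub_le_integral_norm_deriv_sq {f f' : ℝ → V} (hAB : A ≤ B) (hc : 0 < c)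
    (hf : ∀ t ∈ Icc A B, HasDerivWithinAt f (f' t) (Icc A B) t)
    (hf' : ContinuousOn f' (Icc A B)) (w : V) :
    ⟪f B - f A, w⟫ ≤ c * (∫ t in A..B, ‖f' t‖ ^ 2) + (B - A) * ‖w‖ ^ 2 / (4 * c) := by
  have hf'w : ContinuousOn (fun t => ⟪f' t, w⟫) (Icc A B) := by fun_prop
  have hf'sq : ContinuousOn (fun t => ‖f' t‖ ^ 2) (Icc A B) := by fun_prop
  rw [inner_sub_left, ← integral_eq_sub_of_hasDerivWithinAt_Icc_s15 hAB
    (fun t ht => (hf t ht).inner_const w) hf'w]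
  calc ∫ t in A..B, ⟪f' t, w⟫
      ≤ ∫ t in A..B, (c * ‖f' t‖ ^ 2 + ‖w‖ ^ 2 / (4 * c)) :=
        integral_mono_on hAB (hf'w.intervalIntegrable_of_Icc hAB)
          (((hf'sq.intervalIntegrable_of_Icc hAB).const_mul c).add intervalIntegrable_const)
          fun t _ => real_inner_le_mul_norm_sq_add hc _ _
    _ = c * (∫ t in A..B, ‖f' t‖ ^ 2) + (B - A) * ‖w‖ ^ 2 / (4 * c) := by
        rw [integral_add ((hf'sq.intervalIntegrable_of_Icc hAB).const_mul c)
            intervalIntegrable_const,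
          integral_const_mul, integral_const, smul_eq_mul]
        ring

theorem inner_trapezoid_error_le {u u' u'' u''' : ℝ → V} (hAB : A ≤ B) (hc : 0 < c)
    (hu : ∀ t ∈ Icc A B, HasDerivWithinAt u (u' t) (Icc A B) t)
    (hu' : ∀ t ∈ Icc A B, HasDerivWithinAt u' (u'' t) (Icc A B) t)
    (hu'' : ∀ t ∈ Icc A B, HasDerivWithinAt u'' (u''' t) (Icc A B) t)
    (hu''' : ContinuousOn u''' (Icc A B)) (w : V) :
    ⟪u B - u A - ((B - A) / 2) • (u' B + u' A), w⟫
      ≤ c * (∫ t in A..B, ‖u''' t‖ ^ 2) + (B - A) ^ 5 * ‖w‖ ^ 2 / (480 * c) := by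
  have hpeano := trapezoid_error_eq_integral_peano_kernel hAB
    (fun t ht => (hu t ht).inner_const w) (fun t ht => (hu' t ht).inner_const w)
    (fun t ht => (hu'' t ht).inner_const w) (hu'''.inner continuousOn_const)
  have hkernel : ContinuousOn (fun t => (t - A) * (B - t) * ⟪u''' t, w⟫) (Icc A B) := by
    fun_prop
  have hu'''sq : ContinuousOn (fun t => ‖u''' t‖ ^ 2) (Icc A B) := by fun_prop
  have hkernel_sq : Continuous fun t => ((t - A) * (B - t)) ^ 2 := by fun_prop
  simp only [inner_sub_left, real_inner_smul_left, inner_add_left]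
  rw [hpeano, ← integral_const_mul]
  calc ∫ t in A..B, -(1 / 2) * ((t - A) * (B - t) * ⟪u''' t, w⟫)
      ≤ ∫ t in A..B, (c * ‖u''' t‖ ^ 2 + ‖w‖ ^ 2 / (16 * c) * ((t - A) * (B - t)) ^ 2) := by
        refine integral_mono_on hAB ((hkernel.intervalIntegrable_of_Icc hAB).const_mul _) ?_
          fun t _ => ?_
        · exact ((hu'''sq.intervalIntegrable_of_Icc hAB).const_mul c).add
            ((hkernel_sq.intervalIntegrable _ _).const_mul _)
        · have := real_inner_le_mul_norm_sq_add hc (u''' t) ((-((t - A) * (B - t) / 2)) • w)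
          rw [real_inner_smul_right, norm_smul, mul_pow, Real.norm_eq_abs, sq_abs] at this
          convert this using 1 <;> ring
    _ = c * (∫ t in A..B, ‖u''' t‖ ^ 2) + (B - A) ^ 5 * ‖w‖ ^ 2 / (480 * c) := by
        rw [integral_add ((hu'''sq.intervalIntegrable_of_Icc hAB).const_mul c)
            ((hkernel_sq.intervalIntegrable _ _).const_mul _),
          integral_const_mul, integral_const_mul, peano_kernel_sq_integral]
        field_simp
        ring

theorem crank_nicolson_step_le (a : V →ₗ[ℝ] V →ₗ[ℝ] ℝ) {C₀ τ : ℝ} (hC₀ : 0 < C₀)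
    (hpoincare : ∀ v : V, ‖v‖ ^ 2 ≤ C₀ * a v v) (hτ : 0 < τ) (hBA : B - A = τ)
    {u u' u'' u''' ρ ρ' : ℝ → V}
    (hu : ∀ t ∈ Icc A B, HasDerivWithinAt u (u' t) (Icc A B) t)
    (hu' : ∀ t ∈ Icc A B, HasDerivWithinAt u' (u'' t) (Icc A B) t)
    (hu'' : ∀ t ∈ Icc A B, HasDerivWithinAt u'' (u''' t) (Icc A B) t)
    (hu''' : ContinuousOn u''' (Icc A B))
    (hρ : ∀ t ∈ Icc A B, HasDerivWithinAt ρ (ρ' t) (Icc A B) t)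
    (hρ' : ContinuousOn ρ' (Icc A B)) {x y : V}
    (hscheme : ∀ v : V, ⟪(1 / τ) • (x - y), v⟫ + a ((1 / 2 : ℝ) • (x + y)) v
        = -⟪(1 / τ) • (ρ B - ρ A), v⟫
          + ⟪(1 / τ) • (u B - u A) - (1 / 2 : ℝ) • (u' B + u' A), v⟫) :
    ‖x‖ ^ 2 ≤ ‖y‖ ^ 2 + C₀ * (∫ t in A..B, ‖ρ' t‖ ^ 2)
      + (C₀ * τ ^ 4 / 120) * ∫ t in A..B, ‖u''' t‖ ^ 2 := by
  have hAB : A ≤ B := by linarith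
  set w := x + y
  have henergy : ‖x‖ ^ 2 - ‖y‖ ^ 2 + τ / 2 * a w w
      = ⟪ρ B - ρ A, -w⟫ + ⟪u B - u A - (τ / 2) • (u' B + u' A), w⟫ := by
    have h := hscheme w
    simp only [w, real_inner_smul_left, inner_sub_left, inner_add_left, inner_add_right,
      inner_neg_right, map_smul, LinearMap.smul_apply, smul_eq_mul, real_inner_self_eq_norm_sq,
      real_inner_comm x y] at h ⊢
    field_simp at h
    linear_combination h / 2
  have hρbound := inner_sub_le_integral_norm_deriv_sq hAB hC₀ hρ hρ' (-w)
  -- this weight makes the Young remainder of the trapezoidal error equal to that of the `ρ`-term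
  have hubound := inner_trapezoid_error_le (c := C₀ * τ ^ 4 / 120) hAB (by positivity)
    hu hu' hu'' hu''' w
  have hcoercive : τ * ‖w‖ ^ 2 / (4 * C₀) ≤ τ / 4 * a w w := by
    rw [div_le_iff₀ (by positivity)]
    nlinarith [hpoincare w]
  rw [norm_neg, hBA] at hρbound
  rw [hBA, show τ ^ 5 * ‖w‖ ^ 2 / (480 * (C₀ * τ ^ 4 / 120)) = τ * ‖w‖ ^ 2 / (4 * C₀) by
    field_simp; ring] at hubound
  linarith

end InnerProductSpace

theorem crank_nicolson_L2_convergence_general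
    {V : Type*} [NormedAddCommGroup V] [InnerProductSpace ℝ V]
    (a : V →ₗ[ℝ] V →ₗ[ℝ] ℝ)
    (C₀ : ℝ) (hC₀ : 0 < C₀)
    (hpoincare : ∀ v : V, ‖v‖ ^ 2 ≤ C₀ * a v v)
    (τ : ℝ) (hτ : 0 < τ) (N : ℕ) (T : ℝ) (hT : T = N * τ)
    (u u' u'' u''' ρ ρ' : ℝ → V)
    (hu : ∀ t ∈ Icc (0 : ℝ) T, HasDerivWithinAt u (u' t) (Icc 0 T) t)
    (hu' : ∀ t ∈ Icc (0 : ℝ) T, HasDerivWithinAt u' (u'' t) (Icc 0 T) t)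
    (hu'' : ∀ t ∈ Icc (0 : ℝ) T, HasDerivWithinAt u'' (u''' t) (Icc 0 T) t)
    (hu''' : ContinuousOn u''' (Icc 0 T))
    (hρ : ∀ t ∈ Icc (0 : ℝ) T, HasDerivWithinAt ρ (ρ' t) (Icc 0 T) t)
    (hρ' : ContinuousOn ρ' (Icc 0 T))
    (η : ℕ → V)
    (hscheme : ∀ n, 1 ≤ n → n ≤ N → ∀ v : V,
      ⟪(1 / τ) • (η n - η (n - 1)), v⟫ + a ((1 / 2 : ℝ) • (η n + η (n - 1))) v
        = -⟪(1 / τ) • (ρ ((n : ℝ) * τ) - ρ (((n : ℝ) - 1) * τ)), v⟫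
          + ⟪(1 / τ) • (u ((n : ℝ) * τ) - u (((n : ℝ) - 1) * τ))
              - (1 / 2 : ℝ) • (u' ((n : ℝ) * τ) + u' (((n : ℝ) - 1) * τ)), v⟫) :
    ‖η N‖ ^ 2 ≤ ‖η 0‖ ^ 2 + C₀ * (∫ s in (0 : ℝ)..T, ‖ρ' s‖ ^ 2)
      + (C₀ * τ ^ 4 / 120) * ∫ s in (0 : ℝ)..T, ‖u''' s‖ ^ 2 := by
  subst hT
  have hgrid : ∀ n < N, Icc ((n : ℝ) * τ) ((n + 1 : ℕ) * τ) ⊆ Icc 0 (N * τ) := fun n hn =>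
    Icc_subset_Icc (by positivity) (by gcongr; exact_mod_cast hn)
  have hintegrable : ∀ {g : ℝ → V}, ContinuousOn g (Icc 0 (N * τ)) → ∀ n < N,
      IntervalIntegrable (fun s => ‖g s‖ ^ 2) MeasureTheory.volume (n * τ) ((n + 1 : ℕ) * τ) :=
    fun hg n hn => ((hg.norm.pow 2).mono (hgrid n hn)).intervalIntegrable_of_Icc
      (by gcongr; simp)
  have hstep : ∀ n < N, ‖η (n + 1)‖ ^ 2 - ‖η n‖ ^ 2
      ≤ C₀ * (∫ s in (n : ℝ) * τ..((n + 1 : ℕ) : ℝ) * τ, ‖ρ' s‖ ^ 2)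
        + (C₀ * τ ^ 4 / 120) * ∫ s in (n : ℝ) * τ..((n + 1 : ℕ) : ℝ) * τ, ‖u''' s‖ ^ 2 := by
    intro n hn
    have hscheme_n := hscheme (n + 1) (by omega) (by omega)
    simp only [Nat.cast_add, Nat.cast_one, add_sub_cancel_right, Nat.add_sub_cancel]
      at hscheme_n ⊢
    have hsub := hgrid n hn
    push_cast at hsub
    have := crank_nicolson_step_le a hC₀ hpoincare hτ (by ring)
      (fun t ht => (hu t (hsub ht)).mono hsub) (fun t ht => (hu' t (hsub ht)).mono hsub)
      (fun t ht => (hu'' t (hsub ht)).mono hsub) (hu'''.mono hsub)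
      (fun t ht => (hρ t (hsub ht)).mono hsub) (hρ'.mono hsub) hscheme_n
    linarith
  have hsum := Finset.sum_le_sum fun n hn => hstep n (Finset.mem_range.1 hn)
  rw [Finset.sum_range_sub (fun n => ‖η n‖ ^ 2), Finset.sum_add_distrib, ← Finset.mul_sum,
    ← Finset.mul_sum,
    sum_integral_adjacent_intervals (a := fun n : ℕ => (n : ℝ) * τ) (hintegrable hρ'),
    sum_integral_adjacent_intervals (a := fun n : ℕ => (n : ℝ) * τ) (hintegrable hu''')] at hsum
  simp only [Nat.cast_zero, zero_mul] at hsum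
  linarith

/-- Abstract second-order L² convergence of the Crank–Nicolson scheme:
`‖η^N‖² ≤ ‖η⁰‖² + C₀ ∫₀ᵀ ‖ρ'‖² + (C₀ τ⁴ / 120) ∫₀ᵀ ‖u'''‖²`. -/
theorem crank_nicolson_L2_convergence
    {V : Type*} [NormedAddCommGroup V] [InnerProductSpace ℝ V]
    (a : V →ₗ[ℝ] V →ₗ[ℝ] ℝ)
    (hsym : ∀ x y : V, a x y = a y x)
    (hpos : ∀ v : V, 0 ≤ a v v)
    (C₀ : ℝ) (hC₀ : 0 < C₀)
    (hpoincare : ∀ v : V, ‖v‖ ^ 2 ≤ C₀ * a v v)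
    (τ : ℝ) (hτ : 0 < τ) (N : ℕ) (hN : 1 ≤ N) (T : ℝ) (hT : T = N * τ)
    (u u' u'' u''' ρ ρ' : ℝ → V)
    (hu : ∀ t ∈ Icc (0 : ℝ) T, HasDerivWithinAt u (u' t) (Icc 0 T) t)
    (hu' : ∀ t ∈ Icc (0 : ℝ) T, HasDerivWithinAt u' (u'' t) (Icc 0 T) t)
    (hu'' : ∀ t ∈ Icc (0 : ℝ) T, HasDerivWithinAt u'' (u''' t) (Icc 0 T) t)
    (hu''' : ContinuousOn u''' (Icc 0 T))
    (hρ : ∀ t ∈ Icc (0 : ℝ) T, HasDerivWithinAt ρ (ρ' t) (Icc 0 T) t)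
    (hρ' : ContinuousOn ρ' (Icc 0 T))
    (η : ℕ → V)
    (hscheme : ∀ n, 1 ≤ n → n ≤ N → ∀ v : V,
      ⟪(1 / τ) • (η n - η (n - 1)), v⟫ + a ((1 / 2 : ℝ) • (η n + η (n - 1))) v
        = -⟪(1 / τ) • (ρ ((n : ℝ) * τ) - ρ (((n : ℝ) - 1) * τ)), v⟫
          + ⟪(1 / τ) • (u ((n : ℝ) * τ) - u (((n : ℝ) - 1) * τ))
              - (1 / 2 : ℝ) • (u' ((n : ℝ) * τ) + u' (((n : ℝ) - 1) * τ)), v⟫) :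
    ‖η N‖ ^ 2 ≤ ‖η 0‖ ^ 2 + C₀ * (∫ s in (0 : ℝ)..T, ‖ρ' s‖ ^ 2)
      + (C₀ * τ ^ 4 / 120) * ∫ s in (0 : ℝ)..T, ‖u''' s‖ ^ 2 :=
  crank_nicolson_L2_convergence_general a C₀ hC₀ hpoincare τ hτ N T hT u u' u'' u''' ρ ρ' hu hu'
    hu'' hu''' hρ hρ' η hscheme
end

section
/- (Abstract first-order convergence of the implicit θ-scheme, 1/2 ≤ θ ≤ 1, in the energy norm.) Let V be a real inner product space, and let a : V × V → ℝ be a symmetric positive semidefinite bilinear form. Let τ > 0, N ≥ 1, T = Nτ, tⁿ = nτ, and θ ∈ [1/2, 1]. Let u : [0,T] → V be twice continuously differentiable and ρ : [0,T] → V continuously differentiable (in the norm of V), and suppose η⁰, …, η^N ∈ V satisfy, for each n = 1, …, N and every v ∈ V, ⟪(ηⁿ - η^{n-1})/τ, v⟫ + a(θ ηⁿ + (1-θ) η^{n-1}, v) = -⟪(ρ(tⁿ) - ρ(t^{n-1}))/τ, v⟫ + ⟪(u(tⁿ) - u(t^{n-1}))/τ - (θ u'(tⁿ) + (1-θ) u'(t^{n-1})),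 v⟫. Then a(η^N, η^N) ≤ a(η⁰, η⁰) + 2 ∫₀^T ‖ρ'(s)‖² ds + 2 τ² ∫₀^T ‖u''(s)‖² ds. -/
open Set intervalIntegral
open scoped RealInnerProductSpace

/-!
Testing the scheme with `v = ηⁿ - ηⁿ⁻¹` and using the symmetry of `a`,
`a(θηⁿ + (1-θ)ηⁿ⁻¹, ηⁿ - ηⁿ⁻¹) = ½ (a(ηⁿ, ηⁿ) - a(ηⁿ⁻¹, ηⁿ⁻¹)) + (θ - ½) a(ηⁿ - ηⁿ⁻¹, ηⁿ - ηⁿ⁻¹)`,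
whose last term is nonnegative for `θ ≥ ½`. Young's inequality absorbs the right-hand side
into `‖ηⁿ - ηⁿ⁻¹‖² / τ`, so one step raises the energy by at most `(τ/2) ‖w‖²`, where `w` is the
consistency error of the θ-rule minus the difference quotient of `ρ`. The mean value inequality
and Cauchy–Schwarz give `τ ‖(ρ(tⁿ) - ρ(tⁿ⁻¹)) / τ‖² ≤ ∫ ‖ρ'‖²` over the step; the θ-rule error is
`τ⁻¹ ∫ (c - s) u''(s) ds` over the step, with `c = tⁿ - θτ`, so `|c - s| ≤ τ` and
`τ ‖error‖² ≤ τ² ∫ ‖u''‖²`. Summing over the steps telescopes.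
-/

open Filter Topology
open MeasureTheory (volume)

lemma sq_intervalIntegral_le_mul_intervalIntegral_sq {f : ℝ → ℝ} {a b : ℝ} (hab : a ≤ b)
    (hf : ContinuousOn f (Icc a b)) :
    (∫ x in a..b, f x) ^ 2 ≤ (b - a) * ∫ x in a..b, f x ^ 2 := by
  rcases hab.eq_or_lt with rfl | hlt
  · simp
  have hL : 0 < b - a := sub_pos.2 hlt
  set A := ∫ x in a..b, f x
  have hf₁ := hf.intervalIntegrable_of_Icc (μ := volume) hab
  have hf₂ : IntervalIntegrable (fun x => f x ^ 2) volume a b :=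
    (hf.pow 2).intervalIntegrable_of_Icc hab
  -- Cauchy–Schwarz as the nonnegativity of the variance of `f` about its mean `A / (b - a)`
  have hvar : 0 ≤ ∫ x in a..b, (f x - A / (b - a)) ^ 2 :=
    integral_nonneg hab fun _ _ => sq_nonneg _
  have hexpand : ∫ x in a..b, (f x - A / (b - a)) ^ 2
      = (∫ x in a..b, f x ^ 2) - A ^ 2 / (b - a) := by
    simp_rw [sub_sq]
    rw [integral_add (hf₂.sub ((hf₁.const_mul 2).mul_const _)) intervalIntegrable_const,
      integral_sub hf₂ ((hf₁.const_mul 2).mul_const _), integral_mul_const, integral_const_mul,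
      integral_const, smul_eq_mul]
    field_simp
    ring
  rw [hexpand, sub_nonneg, div_le_iff₀ hL] at hvar
  linarith

lemma norm_sub_le_intervalIntegral_norm_deriv {E : Type*} [NormedAddCommGroup E]
    [NormedSpace ℝ E] {F F' : ℝ → E} {a b : ℝ} (hab : a ≤ b)
    (hF : ∀ x ∈ Icc a b, HasDerivWithinAt F (F' x) (Icc a b) x)
    (hF' : ContinuousOn F' (Icc a b)) :
    ‖F b - F a‖ ≤ ∫ x in a..b, ‖F' x‖ := by
  -- `E` need not be complete, so this goes through the mean value inequality, not the FTC
  have hnhds : ∀ x ∈ Ico a b, Icc a b ∈ 𝓝[≥] x := fun x hx =>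
    mem_of_superset (Icc_mem_nhdsGE hx.2) (Icc_subset_Icc_left hx.1)
  have hφ : ContinuousOn (fun x => ‖F' x‖) (Icc a b) := hF'.norm
  have hB : ContinuousOn (fun y => ∫ x in a..y, ‖F' x‖) (Icc a b) := by
    have := continuousOn_primitive_interval (μ := volume) (a := a) (b := b)
      (f := fun x => ‖F' x‖) (by rw [uIcc_of_le hab]; exact hφ.integrableOn_Icc)
    rwa [uIcc_of_le hab] at this
  refine image_norm_le_of_norm_deriv_right_le_deriv_boundary' (f := fun y => F y - F a)
    (B := fun y => ∫ x in a..y, ‖F' x‖)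
    ((show ContinuousOn F (Icc a b) from fun x hx => (hF x hx).continuousWithinAt).sub
      continuousOn_const)
    (fun x hx => ((hF x (Ico_subset_Icc_self hx)).mono_of_mem_nhdsWithin (hnhds x hx)).sub_const _)
    (by simp) hB (fun x hx => ?_) (fun _ _ => le_rfl) (right_mem_Icc.2 hab)
  have hx' := Ico_subset_Icc_self hx
  have hgt : Icc a b ∈ 𝓝[>] x := nhdsWithin_mono x Ioi_subset_Ici_self (hnhds x hx)
  exact integral_hasDerivWithinAt_right
    ((hφ.mono (Icc_subset_Icc_right hx'.2)).intervalIntegrable_of_Icc hx'.1)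
    ⟨Icc a b, hgt, hφ.aestronglyMeasurable measurableSet_Icc⟩
    ((hφ x hx').mono_of_mem_nhdsWithin hgt)

lemma norm_sub_sq_le_mul_intervalIntegral_norm_deriv_sq {E : Type*} [NormedAddCommGroup E]
    [NormedSpace ℝ E] {F F' : ℝ → E} {a b : ℝ} (hab : a ≤ b)
    (hF : ∀ x ∈ Icc a b, HasDerivWithinAt F (F' x) (Icc a b) x)
    (hF' : ContinuousOn F' (Icc a b)) :
    ‖F b - F a‖ ^ 2 ≤ (b - a) * ∫ x in a..b, ‖F' x‖ ^ 2 :=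
  (pow_le_pow_left₀ (norm_nonneg _) (norm_sub_le_intervalIntegral_norm_deriv hab hF hF') 2).trans
    (sq_intervalIntegral_le_mul_intervalIntegral_sq hab hF'.norm)

lemma norm_theta_rule_error_sq_le {E : Type*} [NormedAddCommGroup E] [NormedSpace ℝ E]
    {u u' u'' : ℝ → E} {s t θ : ℝ} (hst : s < t) (hθ : θ ∈ Icc (0 : ℝ) 1)
    (hu : ∀ x ∈ Icc s t, HasDerivWithinAt u (u' x) (Icc s t) x)
    (hu' : ∀ x ∈ Icc s t, HasDerivWithinAt u' (u'' x) (Icc s t) x)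
    (hu'' : ContinuousOn u'' (Icc s t)) :
    ‖(1 / (t - s)) • (u t - u s) - (θ • u' t + (1 - θ) • u' s)‖ ^ 2
      ≤ (t - s) * ∫ x in s..t, ‖u'' x‖ ^ 2 := by
  set τ := t - s
  have hτ : 0 < τ := sub_pos.2 hst
  set c := t - θ * τ
  -- Peano kernel: `g' = (c - x) • u''`, and `|c - x| ≤ τ` on `[s, t]` since `c ∈ [s, t]`
  set g : ℝ → E := fun x => (c - x) • u' x + u x
  have hg : ∀ x ∈ Icc s t, HasDerivWithinAt g ((c - x) • u'' x) (Icc s t) x := by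
    intro x hx
    convert (((hasDerivWithinAt_id x _).const_sub c).smul (hu' x hx)).add (hu x hx) using 1
    · rfl
    · simp
  have hkernel : ∀ x ∈ Icc s t, ‖(c - x) • u'' x‖ ^ 2 ≤ τ ^ 2 * ‖u'' x‖ ^ 2 := by
    intro x hx
    rw [norm_smul, mul_pow, Real.norm_eq_abs, sq_abs]
    have hc : (c - x) ^ 2 ≤ τ ^ 2 :=
      sq_le_sq' (by nlinarith [hx.2, hθ.2]) (by nlinarith [hx.1, hθ.1])
    exact mul_le_mul_of_nonneg_right hc (sq_nonneg _)
  have hdiff : g t - g s = τ • ((1 / τ) • (u t - u s) - (θ • u' t + (1 - θ) • u' s)) := by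
    simp only [g, c, smul_sub, smul_add, smul_smul, mul_one_div_cancel hτ.ne', one_smul]
    module
  have hg' : ContinuousOn (fun x => (c - x) • u'' x) (Icc s t) :=
    (continuousOn_const.sub continuousOn_id).smul hu''
  have hbound := norm_sub_sq_le_mul_intervalIntegral_norm_deriv_sq hst.le hg hg'
  rw [hdiff, norm_smul, Real.norm_eq_abs, abs_of_pos hτ, mul_pow] at hbound
  have hmono := integral_mono_on (μ := volume) (f := fun x => ‖(c - x) • u'' x‖ ^ 2)
    (g := fun x => τ ^ 2 * ‖u'' x‖ ^ 2) hst.le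
    ((hg'.norm.pow 2).intervalIntegrable_of_Icc hst.le)
    (((hu''.norm.pow 2).const_smul (τ ^ 2)).intervalIntegrable_of_Icc hst.le) hkernel
  rw [integral_const_mul] at hmono
  refine le_of_mul_le_mul_left ?_ (by positivity : 0 < τ ^ 2)
  calc τ ^ 2 * _ ≤ τ * ∫ x in s..t, ‖(c - x) • u'' x‖ ^ 2 := hbound
    _ ≤ τ * (τ ^ 2 * ∫ x in s..t, ‖u'' x‖ ^ 2) := mul_le_mul_of_nonneg_left hmono hτ.le
    _ = τ ^ 2 * (τ * ∫ x in s..t, ‖u'' x‖ ^ 2) := by ring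

lemma apply_theta_combination_sub {V : Type*} [AddCommGroup V] [Module ℝ V]
    (a : V →ₗ[ℝ] V →ₗ[ℝ] ℝ) {x y : V} (hxy : a x y = a y x) (θ : ℝ) :
    a (θ • x + (1 - θ) • y) (x - y)
      = (a x x - a y y) / 2 + (θ - 1 / 2) * a (x - y) (x - y) := by
  simp only [map_add, map_sub, map_smul, LinearMap.add_apply, LinearMap.sub_apply,
    LinearMap.smul_apply, smul_eq_mul]
  linear_combination (-1 / 2 : ℝ) * hxy

lemma theta_step_energy_le {V : Type*} [NormedAddCommGroup V] [InnerProductSpace ℝ V]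
    (a : V →ₗ[ℝ] V →ₗ[ℝ] ℝ) (hsym : ∀ x y : V, a x y = a y x) (hpos : ∀ v : V, 0 ≤ a v v)
    {θ τ : ℝ} (hθ : 1 / 2 ≤ θ) (hτ : 0 < τ) {x y w : V}
    (h : ∀ v : V, ⟪(1 / τ) • (x - y), v⟫ + a (θ • x + (1 - θ) • y) v = ⟪w, v⟫) :
    a x x ≤ a y y + τ / 2 * ‖w‖ ^ 2 := by
  have htest := h (x - y)
  rw [real_inner_smul_left, real_inner_self_eq_norm_sq,
    apply_theta_combination_sub a (hsym x y)] at htest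
  have hdissip : 0 ≤ (θ - 1 / 2) * a (x - y) (x - y) := mul_nonneg (by linarith) (hpos _)
  -- Young's inequality, weighted so that its last term is absorbed by `‖x - y‖² / τ`
  have hyoung : ⟪w, x - y⟫ ≤ τ / 4 * ‖w‖ ^ 2 + 1 / τ * ‖x - y‖ ^ 2 := by
    have hsq : τ / 4 * ‖w‖ ^ 2 + 1 / τ * ‖x - y‖ ^ 2 - ‖w‖ * ‖x - y‖
        = (τ * ‖w‖ - 2 * ‖x - y‖) ^ 2 / (4 * τ) := by
      field_simp
      ring
    have hsq_nonneg : 0 ≤ (τ * ‖w‖ - 2 * ‖x - y‖) ^ 2 / (4 * τ) := by positivity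
    linarith [real_inner_le_norm w (x - y)]
  linarith

lemma le_add_intervalIntegral_of_succ_le {e t : ℕ → ℝ} {f : ℝ → ℝ} {n : ℕ}
    (hf : ∀ k < n, IntervalIntegrable f volume (t k) (t (k + 1)))
    (he : ∀ k < n, e (k + 1) ≤ e k + ∫ x in t k..t (k + 1), f x) :
    e n ≤ e 0 + ∫ x in t 0..t n, f x := by
  rw [← sum_integral_adjacent_intervals hf, ← sub_le_iff_le_add', ← Finset.sum_range_sub]
  exact Finset.sum_le_sum fun k hk => sub_le_iff_le_add'.2 (he k (Finset.mem_range.1 hk))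

lemma theta_scheme_step_energy_le {V : Type*} [NormedAddCommGroup V] [InnerProductSpace ℝ V]
    (a : V →ₗ[ℝ] V →ₗ[ℝ] ℝ) (hsym : ∀ x y : V, a x y = a y x) (hpos : ∀ v : V, 0 ≤ a v v)
    {θ : ℝ} (hθ : θ ∈ Icc (1 / 2 : ℝ) 1) {s t τ : ℝ} (hτ : 0 < τ) (hst : t - s = τ)
    {u u' u'' ρ ρ' : ℝ → V}
    (hu : ∀ x ∈ Icc s t, HasDerivWithinAt u (u' x) (Icc s t) x)
    (hu' : ∀ x ∈ Icc s t, HasDerivWithinAt u' (u'' x) (Icc s t) x)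
    (hu'' : ContinuousOn u'' (Icc s t))
    (hρ : ∀ x ∈ Icc s t, HasDerivWithinAt ρ (ρ' x) (Icc s t) x)
    (hρ' : ContinuousOn ρ' (Icc s t)) {x y : V}
    (h : ∀ v : V, ⟪(1 / τ) • (x - y), v⟫ + a (θ • x + (1 - θ) • y) v
      = -⟪(1 / τ) • (ρ t - ρ s), v⟫
        + ⟪(1 / τ) • (u t - u s) - (θ • u' t + (1 - θ) • u' s), v⟫) :
    a x x ≤ a y y + ∫ r in s..t, (‖ρ' r‖ ^ 2 + τ ^ 2 * ‖u'' r‖ ^ 2) := by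
  have hst' : s ≤ t := by linarith
  set δρ := (1 / τ) • (ρ t - ρ s)
  set ε := (1 / τ) • (u t - u s) - (θ • u' t + (1 - θ) • u' s)
  have hδρ : τ * ‖δρ‖ ^ 2 ≤ ∫ r in s..t, ‖ρ' r‖ ^ 2 := by
    have := norm_sub_sq_le_mul_intervalIntegral_norm_deriv_sq hst' hρ hρ'
    rw [hst] at this
    calc τ * ‖δρ‖ ^ 2 = ‖ρ t - ρ s‖ ^ 2 / τ := by
          rw [norm_smul, Real.norm_eq_abs, abs_of_pos (one_div_pos.2 hτ)]
          field_simp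
      _ ≤ _ := by rwa [div_le_iff₀' hτ]
  have hε : ‖ε‖ ^ 2 ≤ τ * ∫ r in s..t, ‖u'' r‖ ^ 2 := by
    have := norm_theta_rule_error_sq_le (by linarith) ⟨by linarith [hθ.1], hθ.2⟩ hu hu' hu''
    rwa [hst] at this
  have henergy := theta_step_energy_le a hsym hpos hθ.1 hτ (w := ε - δρ)
    fun v => by rw [h v, inner_sub_left ε δρ v]; ring
  have hw : ‖ε - δρ‖ ^ 2 ≤ 2 * (‖ε‖ ^ 2 + ‖δρ‖ ^ 2) :=
    (pow_le_pow_left₀ (norm_nonneg _) (norm_sub_le ε δρ) 2).trans add_sq_le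
  rw [integral_add (f := fun r => ‖ρ' r‖ ^ 2) (g := fun r => τ ^ 2 * ‖u'' r‖ ^ 2)
      ((hρ'.norm.pow 2).intervalIntegrable_of_Icc hst')
      (((hu''.norm.pow 2).const_smul (τ ^ 2)).intervalIntegrable_of_Icc hst'),
    integral_const_mul]
  have := mul_le_mul_of_nonneg_left hw (half_pos hτ).le
  have := mul_le_mul_of_nonneg_left hε hτ.le
  linarith

theorem theta_scheme_energy_convergence_general
    {V : Type*} [NormedAddCommGroup V] [InnerProductSpace ℝ V]
    (a : V →ₗ[ℝ] V →ₗ[ℝ] ℝ)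
    (hsym : ∀ x y : V, a x y = a y x)
    (hpos : ∀ v : V, 0 ≤ a v v)
    (τ : ℝ) (hτ : 0 < τ) (N : ℕ) (T : ℝ) (hT : T = N * τ)
    (θ : ℝ) (hθ : θ ∈ Set.Icc (1 / 2 : ℝ) 1)
    (u u' u'' ρ ρ' : ℝ → V)
    (hu : ∀ t ∈ Icc (0 : ℝ) T, HasDerivWithinAt u (u' t) (Icc 0 T) t)
    (hu' : ∀ t ∈ Icc (0 : ℝ) T, HasDerivWithinAt u' (u'' t) (Icc 0 T) t)
    (hu'' : ContinuousOn u'' (Icc 0 T))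
    (hρ : ∀ t ∈ Icc (0 : ℝ) T, HasDerivWithinAt ρ (ρ' t) (Icc 0 T) t)
    (hρ' : ContinuousOn ρ' (Icc 0 T))
    (η : ℕ → V)
    (hscheme : ∀ n, 1 ≤ n → n ≤ N → ∀ v : V,
      ⟪(1 / τ) • (η n - η (n - 1)), v⟫ + a (θ • η n + (1 - θ) • η (n - 1)) v
        = -⟪(1 / τ) • (ρ ((n : ℝ) * τ) - ρ (((n : ℝ) - 1) * τ)), v⟫
          + ⟪(1 / τ) • (u ((n : ℝ) * τ) - u (((n : ℝ) - 1) * τ))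
              - (θ • u' ((n : ℝ) * τ) + (1 - θ) • u' (((n : ℝ) - 1) * τ)), v⟫) :
    a (η N) (η N) ≤ a (η 0) (η 0) + 2 * (∫ s in (0 : ℝ)..T, ‖ρ' s‖ ^ 2)
      + 2 * τ ^ 2 * ∫ s in (0 : ℝ)..T, ‖u'' s‖ ^ 2 := by
  have hT₀ : 0 ≤ T := hT ▸ by positivity
  set t : ℕ → ℝ := fun k => k * τ
  have hcell : ∀ k < N, Icc (t k) (t (k + 1)) ⊆ Icc 0 T := fun k hk =>
    Icc_subset_Icc (by positivity)
      (hT ▸ mul_le_mul_of_nonneg_right (by exact_mod_cast hk) hτ.le)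
  have hf : ContinuousOn (fun r => ‖ρ' r‖ ^ 2 + τ ^ 2 * ‖u'' r‖ ^ 2) (Icc 0 T) :=
    (hρ'.norm.pow 2).add ((hu''.norm.pow 2).const_smul (τ ^ 2))
  have henergy := le_add_intervalIntegral_of_succ_le (e := fun k => a (η k) (η k)) (t := t)
    (fun k hk => (hf.mono (hcell k hk)).intervalIntegrable_of_Icc
      (mul_le_mul_of_nonneg_right (by simp) hτ.le))
    fun k hk => by
      have hsch := hscheme (k + 1) (by omega) hk
      rw [Nat.add_sub_cancel, show ((↑(k + 1) : ℝ) - 1) = k by push_cast; ring] at hsch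
      exact theta_scheme_step_energy_le a hsym hpos hθ hτ (by push_cast [t]; ring)
        (fun x hx => (hu x (hcell k hk hx)).mono (hcell k hk))
        (fun x hx => (hu' x (hcell k hk hx)).mono (hcell k hk)) (hu''.mono (hcell k hk))
        (fun x hx => (hρ x (hcell k hk hx)).mono (hcell k hk)) (hρ'.mono (hcell k hk)) hsch
  simp only [t, CharP.cast_eq_zero, zero_mul, ← hT] at henergy
  rw [integral_add (f := fun r => ‖ρ' r‖ ^ 2) (g := fun r => τ ^ 2 * ‖u'' r‖ ^ 2)
      ((hρ'.norm.pow 2).intervalIntegrable_of_Icc hT₀)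
      (((hu''.norm.pow 2).const_smul (τ ^ 2)).intervalIntegrable_of_Icc hT₀),
    integral_const_mul] at henergy
  have hρ₀ : 0 ≤ ∫ s in (0 : ℝ)..T, ‖ρ' s‖ ^ 2 := integral_nonneg hT₀ fun _ _ => by positivity
  have hu₀ : 0 ≤ τ ^ 2 * ∫ s in (0 : ℝ)..T, ‖u'' s‖ ^ 2 :=
    mul_nonneg (sq_nonneg τ) (integral_nonneg hT₀ fun _ _ => by positivity)
  linarith

/-- Abstract first-order convergence of the implicit θ-scheme, `θ ∈ [1/2, 1]`,
in the energy norm: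
`a(η^N, η^N) ≤ a(η⁰, η⁰) + 2 ∫₀ᵀ ‖ρ'‖² + 2 τ² ∫₀ᵀ ‖u''‖²`. -/
theorem theta_scheme_energy_convergence
    {V : Type*} [NormedAddCommGroup V] [InnerProductSpace ℝ V]
    (a : V →ₗ[ℝ] V →ₗ[ℝ] ℝ)
    (hsym : ∀ x y : V, a x y = a y x)
    (hpos : ∀ v : V, 0 ≤ a v v)
    (τ : ℝ) (hτ : 0 < τ) (N : ℕ) (hN : 1 ≤ N) (T : ℝ) (hT : T = N * τ)
    (θ : ℝ) (hθ : θ ∈ Set.Icc (1 / 2 : ℝ) 1)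
    (u u' u'' ρ ρ' : ℝ → V)
    (hu : ∀ t ∈ Icc (0 : ℝ) T, HasDerivWithinAt u (u' t) (Icc 0 T) t)
    (hu' : ∀ t ∈ Icc (0 : ℝ) T, HasDerivWithinAt u' (u'' t) (Icc 0 T) t)
    (hu'' : ContinuousOn u'' (Icc 0 T))
    (hρ : ∀ t ∈ Icc (0 : ℝ) T, HasDerivWithinAt ρ (ρ' t) (Icc 0 T) t)
    (hρ' : ContinuousOn ρ' (Icc 0 T))
    (η : ℕ → V)
    (hscheme : ∀ n, 1 ≤ n → n ≤ N → ∀ v : V,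
      ⟪(1 / τ) • (η n - η (n - 1)), v⟫ + a (θ • η n + (1 - θ) • η (n - 1)) v
        = -⟪(1 / τ) • (ρ ((n : ℝ) * τ) - ρ (((n : ℝ) - 1) * τ)), v⟫
          + ⟪(1 / τ) • (u ((n : ℝ) * τ) - u (((n : ℝ) - 1) * τ))
              - (θ • u' ((n : ℝ) * τ) + (1 - θ) • u' (((n : ℝ) - 1) * τ)), v⟫) :
    a (η N) (η N) ≤ a (η 0) (η 0) + 2 * (∫ s in (0 : ℝ)..T, ‖ρ' s‖ ^ 2)
      + 2 * τ ^ 2 * ∫ s in (0 : ℝ)..T, ‖u'' s‖ ^ 2 :=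
  theta_scheme_energy_convergence_general a hsym hpos τ hτ N T hT θ hθ u u' u'' ρ ρ' hu hu' hu'' hρ
    hρ' η hscheme
end
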